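/- arXiv:1904.08969 — 11 statements merged into one kernel-verified Lean document; each statement's English description precedes it below -/
import Mathlib

section
/- Let f : X → Y be a continuous map from a Čech-complete space X to a functionally Hausdorff space Y. If the cardinality of the image f(X) is strictly greater than max{ψ(Y), l(X)}, then there exists a compact subset K ⊆ X whose image f(K) is not scattered. -/
open Cardinal Set Topology

universe u

def FunctionallyHausdorff (X : Type u) [TopologicalSpace X] : Prop :=
  ∀ x y : X, x ≠ y → ∃ f : X → unitInterval, Continuous f ∧ f x = 0 ∧ f y = 1

def IsCechComplete (X : Type u) [TopologicalSpace X] : Prop :=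
  ∃ (K : Type u) (_ : TopologicalSpace K) (e : X → K),
    CompactSpace K ∧ T2Space K ∧ IsEmbedding e ∧ DenseRange e ∧ IsGδ (Set.range e)

noncomputable def lindelofNumber (X : Type u) [TopologicalSpace X] : Cardinal.{u} :=
  sInf {κ : Cardinal.{u} | ℵ₀ ≤ κ ∧ ∀ U : Set (Set X), (∀ u ∈ U, IsOpen u) → ⋃₀ U = Set.univ →
    ∃ V ⊆ U, #↥V ≤ κ ∧ ⋃₀ V = Set.univ}

noncomputable def pseudocharacter (X : Type u) [TopologicalSpace X] : Cardinal.{u} :=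
  sInf {κ : Cardinal.{u} | ℵ₀ ≤ κ ∧ ∀ x : X, ∃ 𝒰 : Set (Set X),
    #↥𝒰 ≤ κ ∧ (∀ U ∈ 𝒰, IsOpen U ∧ x ∈ U) ∧ ⋂₀ 𝒰 = ⋂₀ {U : Set X | IsOpen U ∧ x ∈ U}}

def IsScatteredSet {X : Type u} [TopologicalSpace X] (S : Set X) : Prop :=
  ∀ T ⊆ S, T.Nonempty → ∃ x ∈ T, ∃ U : Set X, IsOpen U ∧ U ∩ T = {x}

def IsKAnalytic (X : Type u) [TopologicalSpace X] : Prop :=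
  ∃ (P : Type u) (_ : TopologicalSpace P) (f : P → X),
    LindelofSpace P ∧ IsCechComplete P ∧ Continuous f ∧ Function.Surjective f

def IsAnalyticSpace (X : Type u) [TopologicalSpace X] : Prop :=
  ∃ (P : Type u) (_ : TopologicalSpace P), PolishSpace P ∧
    ∃ f : P → X, Continuous f ∧ Function.Surjective f

noncomputable def boundingNumber : Cardinal.{0} :=
  sInf {κ : Cardinal.{0} | ∃ B : Set (ℕ → ℕ), #↥B = κ ∧
    ∀ y : ℕ → ℕ, ∃ x ∈ B, {n : ℕ | ¬ x n ≤ y n}.Infinite}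


/-!
Put `κ = max ψ(Y) l(X)` and call `x` a condensation point of a closed set `A` when `f (A ∩ N)`
has more than `κ` points for every neighbourhood `N` of `x`. If `|f A| > κ`, then `l(X) ≤ κ`
yields condensation points of `A`, and `ψ(Y) ≤ κ` prevents them from all having the same image.
Separating two distinct such images by disjoint closed neighbourhoods splits `A` into two closed
sets with large and disjoint images. Iterating this along `X = ⋂ Gₙ` inside a compactification,
with the closures of the level-`n` pieces inside `Gₙ`, produces a binary tree of closed sets whose
levels cut out a compact `K` meeting every node. A minimal closed `M ⊆ K` meeting every node has
an image without isolated points: if `f M ∩ U = {y}`, minimality makes `f` constantly `y` on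
`M ∩ A s` for some node `s`, yet both children of `s` meet `M` and have disjoint images.
-/

lemma mk_iUnion_le_of_le {ι α : Type u} {κ : Cardinal.{u}} (hκ : ℵ₀ ≤ κ) (hι : #ι ≤ κ)
    {T : ι → Set α} (hT : ∀ i, #(T i) ≤ κ) : #(⋃ i, T i) ≤ κ :=
  (mk_iUnion_le T).trans ((mul_le_mul' hι (ciSup_le' hT)).trans (mul_eq_self hκ).le)

lemma nonempty_of_lt_mk_image {X Y : Type u} {κ : Cardinal.{u}} {f : X → Y} {B : Set X}
    (h : κ < #(f '' B)) : B.Nonempty := by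
  by_contra hB
  simp [not_nonempty_iff_eq_empty.1 hB] at h

section CardinalFunctions

variable (X : Type u) [TopologicalSpace X]

def IsLindelofBound (κ : Cardinal.{u}) : Prop :=
  ∀ U : Set (Set X), (∀ u ∈ U, IsOpen u) → ⋃₀ U = Set.univ →
    ∃ V ⊆ U, #V ≤ κ ∧ ⋃₀ V = Set.univ

def IsPseudocharacterBound (κ : Cardinal.{u}) : Prop :=
  ∀ x : X, ∃ 𝒰 : Set (Set X), #𝒰 ≤ κ ∧ (∀ U ∈ 𝒰, IsOpen U) ∧ ⋂₀ 𝒰 = {x}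

variable {X}

lemma IsLindelofBound.mono {κ μ : Cardinal.{u}} (h : IsLindelofBound X κ) (hκμ : κ ≤ μ) :
    IsLindelofBound X μ := fun U hU hUX =>
  (h U hU hUX).imp fun _ ⟨hVU, hVκ, hVX⟩ => ⟨hVU, hVκ.trans hκμ, hVX⟩

lemma IsPseudocharacterBound.mono {κ μ : Cardinal.{u}} (h : IsPseudocharacterBound X κ)
    (hκμ : κ ≤ μ) : IsPseudocharacterBound X μ := fun x =>
  (h x).imp fun _ ⟨h𝒰κ, h𝒰⟩ => ⟨h𝒰κ.trans hκμ, h𝒰⟩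

lemma aleph0_le_lindelofNumber_and_isLindelofBound :
    ℵ₀ ≤ lindelofNumber X ∧ IsLindelofBound X (lindelofNumber X) :=
  csInf_mem (s := {κ | ℵ₀ ≤ κ ∧ IsLindelofBound X κ})
    ⟨max ℵ₀ #(Set X), le_max_left _ _, fun U _ hUX =>
      ⟨U, subset_rfl, (mk_set_le U).trans (le_max_right _ _), hUX⟩⟩

lemma isPseudocharacterBound_pseudocharacter [T1Space X] :
    IsPseudocharacterBound X (pseudocharacter X) := by
  intro x
  have hspec := csInf_mem (s := {κ : Cardinal.{u} | ℵ₀ ≤ κ ∧ ∀ x : X, ∃ 𝒰 : Set (Set X),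
      #𝒰 ≤ κ ∧ (∀ U ∈ 𝒰, IsOpen U ∧ x ∈ U) ∧ ⋂₀ 𝒰 = ⋂₀ {U : Set X | IsOpen U ∧ x ∈ U}})
    ⟨max ℵ₀ #(Set X), le_max_left _ _, fun x =>
      ⟨_, (mk_set_le _).trans (le_max_right _ _), fun _ hU => hU, rfl⟩⟩
  obtain ⟨𝒰, h𝒰κ, h𝒰x, h𝒰⟩ := hspec.2 x
  refine ⟨𝒰, h𝒰κ, fun U hU => (h𝒰x U hU).1, h𝒰.trans ?_⟩
  rw [← nhdsKer_eq_of_t1Space {x}, nhdsKer_def]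
  simp only [singleton_subset_iff]

end CardinalFunctions

section Condensation

variable {X Y : Type u} [TopologicalSpace X] {κ : Cardinal.{u}}

lemma mk_image_le_of_forall_exists_mem_nhds (hκ : ℵ₀ ≤ κ) (hX : IsLindelofBound X κ)
    (f : X → Y) {B : Set X} (hB : IsClosed B)
    (h : ∀ x ∈ B, ∃ N ∈ 𝓝 x, #(f '' (B ∩ N)) ≤ κ) : #(f '' B) ≤ κ := by
  set 𝒞 : Set (Set X) := insert Bᶜ {U | IsOpen U ∧ #(f '' (B ∩ U)) ≤ κ}
  have h𝒞 : ⋃₀ 𝒞 = Set.univ := by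
    refine eq_univ_of_forall fun x => ?_
    by_cases hx : x ∈ B
    · obtain ⟨N, hN, hNκ⟩ := h x hx
      have hint : #(f '' (B ∩ interior N)) ≤ κ :=
        (mk_le_mk_of_subset (image_mono (inter_subset_inter_right _ interior_subset))).trans hNκ
      exact ⟨interior N, Or.inr ⟨isOpen_interior, hint⟩, mem_interior_iff_mem_nhds.2 hN⟩
    · exact ⟨Bᶜ, Or.inl rfl, hx⟩
  obtain ⟨V, hV𝒞, hVκ, hV⟩ :=
    hX 𝒞 (by rintro U (rfl | hU); exacts [hB.isOpen_compl, hU.1]) h𝒞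
  have hcover : f '' B ⊆ ⋃ U : V, f '' (B ∩ U) := by
    rintro _ ⟨x, hx, rfl⟩
    obtain ⟨U, hUV, hxU⟩ : x ∈ ⋃₀ V := hV ▸ mem_univ x
    exact mem_iUnion.2 ⟨⟨U, hUV⟩, x, ⟨hx, hxU⟩, rfl⟩
  refine (mk_le_mk_of_subset hcover).trans (mk_iUnion_le_of_le hκ hVκ fun ⟨U, hUV⟩ => ?_)
  rcases hV𝒞 hUV with rfl | hU
  · simp
  · exact hU.2

variable [TopologicalSpace Y]

def IsCondensationPt (κ : Cardinal.{u}) (f : X → Y) (A : Set X) (x : X) : Prop :=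
  ∀ N ∈ 𝓝 x, κ < #(f '' (A ∩ N))

lemma mk_image_le_of_condensationPt_imp_eq (hκ : ℵ₀ ≤ κ) (hX : IsLindelofBound X κ)
    (hY : IsPseudocharacterBound Y κ) {f : X → Y} (hf : Continuous f) {A : Set X}
    (hA : IsClosed A) {y : Y} (h : ∀ x ∈ A, IsCondensationPt κ f A x → f x = y) :
    #(f '' A) ≤ κ := by
  obtain ⟨𝒰, h𝒰κ, h𝒰, h𝒰y⟩ := hY y
  have hsmall : ∀ U ∈ 𝒰, #(f '' (A \ f ⁻¹' U)) ≤ κ := by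
    refine fun U hU => mk_image_le_of_forall_exists_mem_nhds hκ hX f
      (hA.sdiff ((h𝒰 U hU).preimage hf)) fun x hx => ?_
    have hx' : ¬ IsCondensationPt κ f A x := fun hc =>
      hx.2 (show f x ∈ U by rw [h x hx.1 hc]; exact h𝒰y.superset rfl U hU)
    simp only [IsCondensationPt, not_forall, not_lt] at hx'
    obtain ⟨N, hN, hNκ⟩ := hx'
    refine ⟨N, hN, le_trans (mk_le_mk_of_subset ?_) hNκ⟩
    exact image_mono (inter_subset_inter_left _ sdiff_subset)
  have hcover : f '' A ⊆ insert y (⋃ U : 𝒰, f '' (A \ f ⁻¹' U)) := by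
    rintro _ ⟨x, hx, rfl⟩
    by_cases hfx : f x = y
    · exact Or.inl hfx
    have : f x ∉ ⋂₀ 𝒰 := h𝒰y ▸ hfx
    obtain ⟨U, hU, hxU⟩ : ∃ U ∈ 𝒰, f x ∉ U := by simpa [mem_sInter] using this
    exact Or.inr (mem_iUnion.2 ⟨⟨U, hU⟩, x, ⟨hx, hxU⟩, rfl⟩)
  calc #(f '' A)
      ≤ #(⋃ U : 𝒰, f '' (A \ f ⁻¹' U)) + 1 := (mk_le_mk_of_subset hcover).trans mk_insert_le
    _ ≤ κ + 1 := by gcongr; exact mk_iUnion_le_of_le hκ h𝒰κ fun U => hsmall U U.2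
    _ = κ := add_one_eq hκ

lemma exists_condensationPt_pair (hκ : ℵ₀ ≤ κ) (hX : IsLindelofBound X κ)
    (hY : IsPseudocharacterBound Y κ) {f : X → Y} (hf : Continuous f) {A : Set X}
    (hA : IsClosed A) (hbig : κ < #(f '' A)) :
    ∃ x₀ x₁, IsCondensationPt κ f A x₀ ∧ IsCondensationPt κ f A x₁ ∧ f x₀ ≠ f x₁ := by
  have hlarge : ∀ y, ∃ x ∈ A, IsCondensationPt κ f A x ∧ f x ≠ y := by
    intro y
    by_contra! h
    exact (mk_image_le_of_condensationPt_imp_eq hκ hX hY hf hA h).not_gt hbig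
  obtain ⟨a, -⟩ := nonempty_of_lt_mk_image hbig
  obtain ⟨x₀, -, hx₀, -⟩ := hlarge (f a)
  obtain ⟨x₁, -, hx₁, hne⟩ := hlarge (f x₀)
  exact ⟨x₀, x₁, hx₀, hx₁, hne.symm⟩

end Condensation

lemma FunctionallyHausdorff.t25Space {Y : Type u} [TopologicalSpace Y]
    (hY : FunctionallyHausdorff Y) : T25Space Y where
  t2_5 x y hxy := by
    obtain ⟨φ, hφ, hφx, hφy⟩ := hY x y hxy
    exact (tendsto_lift'_closure_nhds hφ x).disjoint
      (T25Space.t2_5 (by rw [hφx, hφy]; exact zero_ne_one))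
      (tendsto_lift'_closure_nhds hφ y)

section Splitting

variable {X Y Z : Type u} [TopologicalSpace X] [TopologicalSpace Y] [TopologicalSpace Z]
  {κ : Cardinal.{u}} {f : X → Y} {e : X → Z}

lemma IsCondensationPt.exists_isClosed_subset [RegularSpace Z] {A : Set X} {x : X}
    (hx : IsCondensationPt κ f A x) (hA : IsClosed A) (hf : Continuous f) (he : Continuous e)
    {G : Set Z} (hG : G ∈ 𝓝 (e x)) {V : Set Y} (hV : V ∈ 𝓝 (f x)) (hVc : IsClosed V) :
    ∃ B ⊆ A, IsClosed B ∧ κ < #(f '' B) ∧ closure (e '' B) ⊆ G ∧ f '' B ⊆ V := by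
  obtain ⟨t, ht, htc, htG⟩ := exists_mem_nhds_isClosed_subset hG
  have hN : e ⁻¹' t ∩ f ⁻¹' V ∈ 𝓝 x :=
    Filter.inter_mem (he.continuousAt.preimage_mem_nhds ht) (hf.continuousAt.preimage_mem_nhds hV)
  refine ⟨A ∩ (e ⁻¹' t ∩ f ⁻¹' V), inter_subset_left,
    hA.inter ((htc.preimage he).inter (hVc.preimage hf)), hx _ hN, ?_,
    image_subset_iff.2 fun _ hx => hx.2.2⟩
  exact (closure_minimal (image_subset_iff.2 fun _ hx => hx.2.1) htc).trans htG

lemma exists_split_of_lt_mk_image [T25Space Y] [RegularSpace Z] (hκ : ℵ₀ ≤ κ) (hX : IsLindelofBound X κ)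
    (hY : IsPseudocharacterBound Y κ) (hf : Continuous f) (he : Continuous e) {G : Set Z}
    (hG : IsOpen G) (heG : range e ⊆ G) {A : Set X} (hA : IsClosed A) (hbig : κ < #(f '' A)) :
    ∃ B₀ B₁ : Set X, (IsClosed B₀ ∧ κ < #(f '' B₀)) ∧ (IsClosed B₁ ∧ κ < #(f '' B₁)) ∧
      (B₀ ⊆ A ∧ closure (e '' B₀) ⊆ G) ∧ (B₁ ⊆ A ∧ closure (e '' B₁) ⊆ G) ∧
      Disjoint (f '' B₀) (f '' B₁) := by
  obtain ⟨x₀, x₁, hx₀, hx₁, hne⟩ := exists_condensationPt_pair hκ hX hY hf hA hbig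
  obtain ⟨V₀, hV₀, V₁, hV₁, hV⟩ := exists_nhds_disjoint_closure hne
  obtain ⟨B₀, hB₀A, hB₀, hB₀κ, hB₀G, hB₀V⟩ := hx₀.exists_isClosed_subset hA hf he
    (hG.mem_nhds (heG (mem_range_self x₀))) (Filter.mem_of_superset hV₀ subset_closure)
    isClosed_closure
  obtain ⟨B₁, hB₁A, hB₁, hB₁κ, hB₁G, hB₁V⟩ := hx₁.exists_isClosed_subset hA hf he
    (hG.mem_nhds (heG (mem_range_self x₁))) (Filter.mem_of_superset hV₁ subset_closure)
    isClosed_closure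
  exact ⟨B₀, B₁, ⟨hB₀, hB₀κ⟩, ⟨hB₁, hB₁κ⟩, ⟨hB₀A, hB₀G⟩, ⟨hB₁A, hB₁G⟩, hV.mono hB₀V hB₁V⟩

end Splitting

lemma exists_binary_scheme {α : Type*} (P : α → Prop) (R : ℕ → α → α → Prop)
    (D : α → α → Prop) {a : α} (ha : P a)
    (step : ∀ n x, P x → ∃ y z, P y ∧ P z ∧ R n x y ∧ R n x z ∧ D y z) :
    ∃ A : List Bool → α, (∀ s, P (A s)) ∧ (∀ i s, R s.length (A s) (A (i :: s))) ∧
      ∀ s, D (A (false :: s)) (A (true :: s)) := by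
  choose! g₀ g₁ hg using step
  let A : List Bool → α := fun s =>
    s.rec (motive := fun _ => α) a fun i s As => cond i (g₁ s.length As) (g₀ s.length As)
  have hA : ∀ s, P (A s) := by
    intro s
    induction s with
    | nil => exact ha
    | cons i s ih => cases i; exacts [(hg _ _ ih).1, (hg _ _ ih).2.1]
  refine ⟨A, hA, fun i s => ?_, fun s => (hg _ _ (hA s)).2.2.2.2⟩
  cases i; exacts [(hg _ _ (hA s)).2.2.1, (hg _ _ (hA s)).2.2.2.1]

section ListFamily

variable {α β : Type*} {A : List β → Set α}

lemma subset_drop_of_cons_subset (hA : ∀ i s, A (i :: s) ⊆ A s) (s : List β) (k : ℕ) :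
    A s ⊆ A (s.drop k) := by
  induction s generalizing k with
  | nil => simp
  | cons i s ih =>
    cases k with
    | zero => rfl
    | succ k => exact (hA i s).trans (ih k)

lemma subset_of_lt_length (hA : ∀ i s, A (i :: s) ⊆ A s) {G : ℕ → Set α}
    (hG : ∀ i s, A (i :: s) ⊆ G s.length) {s : List β} {k : ℕ} (hk : k < s.length) :
    A s ⊆ G k := by
  induction s with
  | nil => simp at hk
  | cons i s ih =>
    rcases (Nat.lt_succ_iff_lt_or_eq.1 hk) with hk | rfl
    · exact (hA i s).trans (ih hk)
    · exact hG i s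

end ListFamily

lemma exists_isCompact_isClosed_inter_nonempty {X Z : Type*} [TopologicalSpace X]
    [TopologicalSpace Z] [CompactSpace Z] {e : X → Z} (he : IsEmbedding e) {G : ℕ → Set Z}
    (hG : ⋂ n, G n ⊆ range e) {A : List Bool → Set X} (hA : ∀ s, IsClosed (A s))
    (hne : ∀ s, (A s).Nonempty) (hcons : ∀ i s, A (i :: s) ⊆ A s)
    (hAG : ∀ i s, closure (e '' A (i :: s)) ⊆ G s.length) :
    ∃ K : Set X, IsCompact K ∧ IsClosed K ∧ ∀ s, (K ∩ A s).Nonempty := by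
  set C : List Bool → Set Z := fun s => closure (e '' A s)
  have hCcons : ∀ i s, C (i :: s) ⊆ C s := fun i s => closure_mono (image_mono (hcons i s))
  have hCA : ∀ s, e ⁻¹' C s = A s := fun s => by
    rw [← he.closure_eq_preimage_closure_image, (hA s).closure_eq]
  set L : Set Z := ⋂ n, ⋃ t ∈ {t : List Bool | t.length = n}, C t
  have hL : IsClosed L := isClosed_iInter fun n =>
    (List.finite_length_eq Bool n).isClosed_biUnion fun _ _ => isClosed_closure
  have hLe : L ⊆ range e := fun z hz => hG <| mem_iInter.2 fun n => by
    obtain ⟨t, ht, hzt⟩ := mem_iUnion₂.1 (mem_iInter.1 hz (n + 1))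
    exact subset_of_lt_length hCcons hAG (k := n) (by simp_all) hzt
  refine ⟨e ⁻¹' L, ?_, hL.preimage he.continuous, fun s => ?_⟩
  · rw [he.isCompact_iff, image_preimage_eq_of_subset hLe]
    exact hL.isCompact
  -- prepending `false`s to `s` gives a decreasing sequence of nodes below `s`
  set u : ℕ → List Bool := fun m => List.replicate m false ++ s
  obtain ⟨z, hz⟩ := IsCompact.nonempty_iInter_of_sequence_nonempty_isCompact_isClosed
    (fun m => C (u m)) (fun m => hCcons false (u m)) (fun m => ((hne _).image e).closure)
    isClosed_closure.isCompact (fun _ => isClosed_closure)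
  have hzG : z ∈ ⋂ n, G n := mem_iInter.2 fun n =>
    subset_of_lt_length hCcons hAG (s := u (n + 1)) (by simp [u]; omega) (mem_iInter.1 hz (n + 1))
  obtain ⟨x, rfl⟩ := hG hzG
  have hx : ∀ m, x ∈ A (u m) := fun m => hCA _ ▸ mem_iInter.1 hz m
  refine ⟨x, mem_iInter.2 fun n => mem_biUnion (x := (u n).drop s.length) (by simp [u])
    (subset_closure (mem_image_of_mem e (subset_drop_of_cons_subset hcons _ _ (hx n)))), hx 0⟩

lemma exists_minimal_isClosed_inter_nonempty {X ι : Type*} [TopologicalSpace X] {K : Set X}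
    (hK : IsCompact K) (hKc : IsClosed K) {A : ι → Set X} (hA : ∀ i, IsClosed (A i))
    (hKA : ∀ i, (K ∩ A i).Nonempty) :
    ∃ M, Minimal (fun M => M ⊆ K ∧ IsClosed M ∧ ∀ i, (M ∩ A i).Nonempty) M := by
  set S := {M | M ⊆ K ∧ IsClosed M ∧ ∀ i, (M ∩ A i).Nonempty}
  suffices ∀ c ⊆ S, IsChain (· ⊆ ·) c → c.Nonempty → ∃ lb ∈ S, ∀ M ∈ c, lb ⊆ M from
    let ⟨M, _, hM⟩ := zorn_superset_nonempty S this K ⟨subset_rfl, hKc, hKA⟩; ⟨M, hM⟩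
  intro c hc hchain ⟨M₀, hM₀⟩
  refine ⟨⋂₀ c, ⟨(sInter_subset_of_mem hM₀).trans (hc hM₀).1,
    isClosed_sInter fun M hM => (hc hM).2.1, fun i => ?_⟩, fun M hM => sInter_subset_of_mem hM⟩
  have : Nonempty c := ⟨⟨M₀, hM₀⟩⟩
  have hdir : Directed (· ⊇ ·) fun M : c => (M : Set X) ∩ A i := by
    rintro ⟨M₁, h₁⟩ ⟨M₂, h₂⟩
    rcases hchain.total h₁ h₂ with h | h
    · exact ⟨⟨M₁, h₁⟩, subset_rfl, inter_subset_inter_left _ h⟩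
    · exact ⟨⟨M₂, h₂⟩, inter_subset_inter_left _ h, subset_rfl⟩
  obtain ⟨z, hz⟩ := IsCompact.nonempty_iInter_of_directed_nonempty_isCompact_isClosed _ hdir
    (fun M => (hc M.2).2.2 i)
    (fun M => hK.of_isClosed_subset ((hc M.2).2.1.inter (hA i))
      (inter_subset_left.trans (hc M.2).1))
    (fun M => (hc M.2).2.1.inter (hA i))
  exact ⟨z, mem_sInter.2 fun M hM => (mem_iInter.1 hz ⟨M, hM⟩).1,
    (mem_iInter.1 hz ⟨M₀, hM₀⟩).2⟩

theorem not_isScatteredSet_image_of_binary_scheme {X Y : Type u} [TopologicalSpace X]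
    [TopologicalSpace Y] {f : X → Y} (hf : Continuous f) {K : Set X} (hK : IsCompact K)
    (hKc : IsClosed K) {A : List Bool → Set X} (hA : ∀ s, IsClosed (A s))
    (hcons : ∀ i s, A (i :: s) ⊆ A s)
    (hdisj : ∀ s, Disjoint (f '' A (false :: s)) (f '' A (true :: s)))
    (hKA : ∀ s, (K ∩ A s).Nonempty) : ¬ IsScatteredSet (f '' K) := by
  intro hscat
  obtain ⟨M, hM⟩ := exists_minimal_isClosed_inter_nonempty hK hKc hA hKA
  obtain ⟨_, ⟨x, hxM, rfl⟩, U, hU, hUM⟩ := hscat (f '' M) (image_mono hM.1.1)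
    (((hM.1.2.2 []).mono inter_subset_left).image f)
  obtain ⟨s, hs⟩ : ∃ s, M ∩ A s ⊆ f ⁻¹' U := by
    by_contra! h
    have hfull : ∀ s, ((M \ f ⁻¹' U) ∩ A s).Nonempty := fun s =>
      let ⟨z, ⟨hzM, hzA⟩, hzU⟩ := not_subset.1 (h s)
      ⟨z, ⟨hzM, hzU⟩, hzA⟩
    have hMU : M ⊆ M \ f ⁻¹' U :=
      hM.2 ⟨sdiff_subset.trans hM.1.1, hM.1.2.1.sdiff (hU.preimage hf), hfull⟩ sdiff_subset
    exact (hMU hxM).2 (hUM.superset rfl).1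
  have hchild : ∀ i, f x ∈ f '' A (i :: s) := fun i => by
    obtain ⟨z, hzM, hzA⟩ := hM.1.2.2 (i :: s)
    have hz : f z ∈ U ∩ f '' M := ⟨hs ⟨hzM, hcons i s hzA⟩, z, hzM, rfl⟩
    rw [hUM] at hz
    exact ⟨z, hzA, hz⟩
  exact (hdisj s).ne_of_mem (hchild false) (hchild true) rfl

theorem stmt0 {X Y : Type u} [TopologicalSpace X] [TopologicalSpace Y]
    (hX : IsCechComplete X) (hY : FunctionallyHausdorff Y)
    (f : X → Y) (hf : Continuous f)
    (hcard : max (pseudocharacter Y) (lindelofNumber X) < #↥(Set.range f)) :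
    ∃ K : Set X, IsCompact K ∧ ¬ IsScatteredSet (f '' K) := by
  obtain ⟨Z, _, e, _, _, he, -, hGδ⟩ := hX
  set κ := max (pseudocharacter Y) (lindelofNumber X)
  have hκ : ℵ₀ ≤ κ := aleph0_le_lindelofNumber_and_isLindelofBound.1.trans (le_max_right _ _)
  have hXκ : IsLindelofBound X κ :=
    aleph0_le_lindelofNumber_and_isLindelofBound.2.mono (le_max_right _ _)
  have := hY.t25Space
  have hYκ : IsPseudocharacterBound Y κ :=
    isPseudocharacterBound_pseudocharacter.mono (le_max_left _ _)
  obtain ⟨G, hGo, hG⟩ := hGδ.eq_iInter_nat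
  obtain ⟨A, hAP, hAR, hAD⟩ := exists_binary_scheme
    (fun B => IsClosed B ∧ κ < #(f '' B)) (fun n B B' => B' ⊆ B ∧ closure (e '' B') ⊆ G n)
    (fun B₀ B₁ => Disjoint (f '' B₀) (f '' B₁)) ⟨isClosed_univ, by rwa [image_univ]⟩
    fun n B hB => exists_split_of_lt_mk_image hκ hXκ hYκ hf he.continuous (hGo n) (hG ▸ iInter_subset G n)
      hB.1 hB.2
  obtain ⟨K, hK, hKc, hKA⟩ := exists_isCompact_isClosed_inter_nonempty he hG.superset
    (fun s => (hAP s).1) (fun s => nonempty_of_lt_mk_image (hAP s).2) (fun i s => (hAR i s).1)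
    (fun i s => (hAR i s).2)
  exact ⟨K, hK, not_isScatteredSet_image_of_binary_scheme hf hK hKc (fun s => (hAP s).1)
    (fun i s => (hAR i s).1) hAD hKA⟩
end

section
/- Let X be a functionally Hausdorff space containing a compact subset K ⊆ X that is not scattered. Then there exists a surjective continuous map from X onto [0,1]. -/
open Cardinal Set Topology

universe u

/-!
Evaluation at all continuous maps `X → [0,1]` is a continuous injection `e` of `X` into the
compact Hausdorff cube `Q = [0,1] ^ C(X, [0,1])`, so a non-scattered subset `T ⊆ K` yields the
nonempty perfect compact set `closure (e T) ⊆ e K`. Splitting perfect sets repeatedly gives a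
binary Cantor scheme of closed sets inside it. If `f n` is a Urysohn function that is `0` on the
depth-`n + 1` pieces with last digit `0` and `1` on those with last digit `1`, then
`g = ∑ f n / 2 ^ (n + 1)` equals `0.d₀d₁d₂…` (base 2) at every point of the branch `d`, and by
compactness every branch meets `closure (e T)`. Hence `g (e K) ⊇ [0,1]`, and `g ∘ e` clamped to
`[0,1]` is onto.
-/

open PiNat

namespace CantorScheme

variable {α Q : Type*} {A : List α → Set Q}

theorem Disjoint.disjoint_of_length_eq (hdisj : CantorScheme.Disjoint A)
    (hanti : CantorScheme.Antitone A) :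
    ∀ {s t : List α}, s.length = t.length → s ≠ t → _root_.Disjoint (A s) (A t)
  | [], [], _, hne => absurd rfl hne
  | i :: s, j :: t, hlen, hne => by
    by_cases hst : s = t
    · subst hst
      exact hdisj s fun hij => hne (by rw [hij])
    · exact (hdisj.disjoint_of_length_eq hanti (by simpa using hlen) hst).mono
        (hanti s i) (hanti t j)

-- Lists grow at the head, as in `PiNat.res`: `i :: s` is the child of `s` with last digit `i`.
def level (A : List α → Set Q) (n : ℕ) (i : α) : Set Q :=
  ⋃ s ∈ {s : List α | s.length = n}, A (i :: s)

theorem isClosed_level [TopologicalSpace Q] [Finite α] (hclosed : ∀ s, IsClosed (A s))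
    (n : ℕ) (i : α) : IsClosed (level A n i) :=
  (List.finite_length_eq α n).isClosed_biUnion fun _ _ => hclosed _

theorem Disjoint.disjoint_level (hdisj : CantorScheme.Disjoint A)
    (hanti : CantorScheme.Antitone A) (n : ℕ) {i j : α} (hij : i ≠ j) :
    _root_.Disjoint (level A n i) (level A n j) := by
  simp only [level, mem_ofPred_eq, disjoint_iUnion_left, disjoint_iUnion_right]
  intro s hs t ht
  exact hdisj.disjoint_of_length_eq hanti (by simp [hs, ht]) (by simp [hij])

theorem mem_level_res {x : Q} {d : ℕ → α} {n : ℕ} (hx : x ∈ A (res d (n + 1))) :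
    x ∈ level A n (d n) :=
  mem_biUnion (res_length d n) hx

theorem Antitone.nonempty_iInter_res [TopologicalSpace Q] (hanti : CantorScheme.Antitone A)
    (hclosed : ∀ s, IsClosed (A s)) (hne : ∀ s, (A s).Nonempty) (hc : IsCompact (A []))
    (d : ℕ → α) : (⋂ n, A (res d n)).Nonempty :=
  IsCompact.nonempty_iInter_of_sequence_nonempty_isCompact_isClosed _
    (fun n => hanti _ (d n)) (fun _ => hne _) hc fun _ => hclosed _

end CantorScheme

section Perfect

variable {Q : Type*} [TopologicalSpace Q]

theorem exists_continuous_eq_ofDigits [NormalSpace Q] (B : ℕ → Fin 2 → Set Q)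
    (hclosed : ∀ n i, IsClosed (B n i)) (hdisj : ∀ n, Disjoint (B n 0) (B n 1)) :
    ∃ g : C(Q, ℝ), ∀ (d : ℕ → Fin 2) (x : Q), (∀ n, x ∈ B n (d n)) → g x = Real.ofDigits d := by
  choose f hf0 hf1 hf01 using fun n =>
    exists_continuous_zero_one_of_isClosed (hclosed n 0) (hclosed n 1) (hdisj n)
  have hsummable : Summable fun n : ℕ => ((2 : ℝ) ^ (n + 1))⁻¹ := by
    simpa [pow_succ] using summable_geometric_two.mul_left (1 / 2 : ℝ)
  have hbound : ∀ n x, ‖f n x * ((2 : ℝ) ^ (n + 1))⁻¹‖ ≤ ((2 : ℝ) ^ (n + 1))⁻¹ := fun n x => by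
    rw [norm_mul, Real.norm_of_nonneg (hf01 n x).1, Real.norm_of_nonneg (by positivity)]
    exact mul_le_of_le_one_left (by positivity) (hf01 n x).2
  refine ⟨⟨fun x => ∑' n, f n x * ((2 : ℝ) ^ (n + 1))⁻¹,
    continuous_tsum (fun n => by fun_prop) hsummable hbound⟩, fun d x hx => ?_⟩
  have hfx : ∀ n, f n x = d n := fun n => by
    have hxn := hx n
    generalize d n = i at hxn ⊢
    fin_cases i
    · simpa using hf0 n hxn
    · simpa using hf1 n hxn
  simp [Real.ofDigits, Real.ofDigitsTerm, hfx]


theorem Perfect.exists_cantorScheme [T25Space Q] {P : Set Q} (hP : Perfect P)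
    (hne : P.Nonempty) :
    ∃ A : List (Fin 2) → Set Q, A [] = P ∧ (∀ s, Perfect (A s) ∧ (A s).Nonempty) ∧
      CantorScheme.Antitone A ∧ CantorScheme.Disjoint A := by
  let N := {C : Set Q // Perfect C ∧ C.Nonempty}
  have hsplit : ∀ C : N, ∃ D : Fin 2 → N,
      (∀ i, (D i : Set Q) ⊆ C) ∧ Pairwise fun i j => Disjoint (D i : Set Q) (D j) := by
    rintro ⟨C, hC, hCne⟩
    obtain ⟨C₀, C₁, ⟨h₀, h₀ne, h₀C⟩, ⟨h₁, h₁ne, h₁C⟩, hdisj⟩ := hC.splitting hCne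
    refine ⟨![⟨C₀, h₀, h₀ne⟩, ⟨C₁, h₁, h₁ne⟩], Fin.forall_fin_two.2 ⟨h₀C, h₁C⟩, ?_⟩
    intro i j hij
    fin_cases i <;> fin_cases j
    all_goals first | exact absurd rfl hij | exact hdisj | exact hdisj.symm
  choose D hDsub hDdisj using hsplit
  let A : List (Fin 2) → N := List.foldr (fun i C => D C i) ⟨P, hP, hne⟩
  exact ⟨fun s => A s, rfl, fun s => (A s).2, fun s i => hDsub (A s) i, fun s => hDdisj (A s)⟩

theorem Perfect.exists_continuous_Icc_subset_image [T4Space Q] {P : Set Q} (hP : Perfect P)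
    (hne : P.Nonempty) (hc : IsCompact P) : ∃ g : C(Q, ℝ), Icc 0 1 ⊆ g '' P := by
  obtain ⟨A, rfl, hA, hanti, hdisj⟩ := hP.exists_cantorScheme hne
  have hclosed : ∀ s, IsClosed (A s) := fun s => (hA s).1.closed
  obtain ⟨g, hg⟩ := exists_continuous_eq_ofDigits (CantorScheme.level A)
    (CantorScheme.isClosed_level hclosed) fun n => hdisj.disjoint_level hanti n zero_ne_one
  refine ⟨g, fun t ht => ?_⟩
  obtain ⟨d, -, rfl⟩ := Real.ofDigits_SurjOn (b := 2) (by norm_num) ht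
  obtain ⟨x, hx⟩ := hanti.nonempty_iInter_res hclosed (fun s => (hA s).2) hc d
  rw [mem_iInter] at hx
  exact ⟨x, hx 0, hg d x fun n => CantorScheme.mem_level_res (hx (n + 1))⟩

end Perfect

theorem Preperfect.image {X Y : Type*} [TopologicalSpace X] [TopologicalSpace Y] {S : Set X}
    (hS : Preperfect S) {f : X → Y} (hf : Continuous f) (hinj : Function.Injective f) :
    Preperfect (f '' S) := by
  rintro _ ⟨x, hx, rfl⟩
  simpa using (hS x hx).map hf.continuousAt hinj

theorem exists_preperfect_subset_of_not_isScatteredSet {X : Type u} [TopologicalSpace X]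
    {K : Set X} (hK : ¬ IsScatteredSet K) : ∃ T ⊆ K, T.Nonempty ∧ Preperfect T := by
  simp only [IsScatteredSet, not_forall, not_exists, not_and] at hK
  obtain ⟨T, hTK, hTne, hT⟩ := hK
  refine ⟨T, hTK, hTne, preperfect_iff_nhds.2 fun x hx U hU => ?_⟩
  obtain ⟨V, hVU, hV, hxV⟩ := mem_nhds_iff.1 hU
  by_contra! h
  exact hT x hx V hV <|
    eq_singleton_iff_unique_mem.2 ⟨⟨hxV, hx⟩, fun y hy => h y ⟨hVU hy.1, hy.2⟩⟩

theorem FunctionallyHausdorff.injective_eval {X : Type u} [TopologicalSpace X]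
    (hX : FunctionallyHausdorff X) :
    Function.Injective fun (x : X) (f : C(X, unitInterval)) => f x := by
  intro x y hxy
  by_contra hne
  obtain ⟨f, hf, hfx, hfy⟩ := hX x y hne
  simpa [hfx, hfy] using congrFun hxy ⟨f, hf⟩

theorem stmt3 {X : Type u} [TopologicalSpace X] (hX : FunctionallyHausdorff X)
    (K : Set X) (hK : IsCompact K) (hns : ¬ IsScatteredSet K) :
    ∃ f : X → unitInterval, Continuous f ∧ Function.Surjective f := by
  obtain ⟨T, hTK, hTne, hT⟩ := exists_preperfect_subset_of_not_isScatteredSet hns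
  let e : X → C(X, unitInterval) → unitInterval := fun x f => f x
  have he : Continuous e := continuous_pi fun f => f.continuous
  have hP : Perfect (closure (e '' T)) := (hT.image he hX.injective_eval).perfect_closure
  have hPK : closure (e '' T) ⊆ e '' K := closure_minimal (image_mono hTK) (hK.image he).isClosed
  obtain ⟨g, hg⟩ :=
    hP.exists_continuous_Icc_subset_image (hTne.image e).closure isClosed_closure.isCompact
  refine ⟨projIcc 0 1 zero_le_one ∘ g ∘ e, by fun_prop, fun t => ?_⟩
  obtain ⟨_, hy, hgy⟩ := hg t.2
  obtain ⟨x, -, rfl⟩ := hPK hy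
  exact ⟨x, by simp [hgy]⟩
end

section
/- Let X be a functionally Hausdorff space and K ⊆ X a compact subset. Then every continuous map f : K → [0,1] admits a continuous extension f̄ : X → [0,1] (i.e., f̄ restricted to K equals f). -/
open Cardinal Set Topology

universe u

theorem stmt4 {X : Type u} [TopologicalSpace X] (hX : FunctionallyHausdorff X)
    (K : Set X) (hK : IsCompact K) (f : K → unitInterval) (hf : Continuous f) :
    ∃ g : X → unitInterval, Continuous g ∧ ∀ x : K, g x = f x := by
  haveI : CompactSpace K := isCompact_iff_compactSpace.mp hK
  set Y := C(X, unitInterval) → unitInterval with hY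
  let e : X → Y := fun x h => h x
  have he : Continuous e := continuous_pi fun h => h.continuous
  have hinj : Function.Injective e := by
    intro x y hxy
    by_contra hne
    obtain ⟨φ, hφc, hφx, hφy⟩ := hX x y hne
    have := congrFun hxy ⟨φ, hφc⟩
    simp only [ContinuousMap.coe_mk, e] at this
    rw [hφx, hφy] at this
    exact zero_ne_one (α := unitInterval) this
  let e' : K → Y := fun k => e k
  have he' : IsClosedEmbedding e' :=
    (he.comp continuous_subtype_val).isClosedEmbedding (hinj.comp Subtype.val_injective)
  -- real-valued f
  let fr : C(K, ℝ) := ⟨fun k => (f k : ℝ), continuous_subtype_val.comp hf⟩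
  have hmem : ∀ k, fr k ∈ Icc (0:ℝ) 1 := fun k => (f k).2
  obtain ⟨G, hGmem, hGe⟩ := fr.exists_extension_forall_mem_of_isClosedEmbedding hmem
    (Set.nonempty_Icc.mpr zero_le_one) he'
  refine ⟨fun x => ⟨G (e x), hGmem _⟩, ?_, ?_⟩
  · exact Continuous.subtype_mk (G.continuous.comp he) _
  · intro k
    ext
    exact congrFun hGe k
end

section
/- Let X be a functionally Hausdorff space which is a continuous image of a Čech-complete space P. Then either the cardinality of X is at most max{l(P), ψ(X)}, or the cardinality of X is at least 𝔠. -/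
open Cardinal Set Topology

universe u

/-!
Let `κ = max (l(P), ψ(X))` and suppose `κ < |X|`. Embed `P` as a `Gδ` subset `range e` of a compact
space `K` and call a closed set `C ⊆ K` big if `g` maps the part of `P` inside `C` onto more than `κ`
points. A big `C` always contains two closed big sets with disjoint images: the image `T` of `C` has
a complete accumulation point `x₀` (a cluster point of the filter of subsets of `T` with small
complement), found by compactness of `K` along a decreasing sequence of big closed sets that shrink
into the open sets defining `range e`; since `{x₀}` is the intersection of at most `κ` open sets,
`T \ U` is still large for one of them, and yields a second such point `x₁ ∉ U`. Neighbourhoods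
of `x₀` and `x₁` with disjoint closures (`X` is Urysohn, being functionally Hausdorff) cut `C` in
two. Iterating, and shrinking into the open sets defining `range e` at each level, gives a Cantor
scheme of big closed sets whose branches meet `range e` and have distinct images, so `𝔠 ≤ |X|`.
-/

open Filter PiNat

section Cardinality

variable {X : Type u} {c : Cardinal.{u}}

theorem exists_le_mk_of_subset_biUnion (hc : c.IsRegular) {ι : Type u} {I : Set ι}
    (hI : #I < c) {S : ι → Set X} {T : Set X} (hT : c ≤ #T) (hTS : T ⊆ ⋃ i ∈ I, S i) :
    ∃ i ∈ I, c ≤ #(S i) := by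
  by_contra! h
  exact (hT.trans (mk_le_mk_of_subset hTS)).not_gt
    ((card_biUnion_lt_iff_forall_of_isRegular hc hI).2 h)

theorem le_mk_diff_singleton (hc : c.IsRegular) {T : Set X} (hT : c ≤ #T) (x : X) :
    c ≤ #↥(T \ {x}) := by
  by_contra! h
  refine (hT.trans (mk_le_mk_of_subset (subset_insert_sdiff_singleton x T))).not_gt ?_
  exact mk_insert_le.trans_lt
    (add_lt_of_lt hc.aleph0_le h (one_lt_aleph0.trans_le hc.aleph0_le))

end Cardinality

section Lindelof

variable {P : Type u} [TopologicalSpace P] {c : Cardinal.{u}}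

def IsLindelofLT (c : Cardinal.{u}) (s : Set P) : Prop :=
  ∀ 𝒰 : Set (Set P), (∀ U ∈ 𝒰, IsOpen U) → s ⊆ ⋃₀ 𝒰 → ∃ 𝒱 ⊆ 𝒰, #𝒱 < c ∧ s ⊆ ⋃₀ 𝒱

theorem IsLindelofLT.of_isClosed_subset {s t : Set P} (hs : IsLindelofLT c s)
    (ht : IsClosed t) (hts : t ⊆ s) : IsLindelofLT c t := by
  intro 𝒰 h𝒰 ht𝒰
  have hcover : s ⊆ ⋃₀ insert tᶜ 𝒰 := fun p _ => by
    by_cases hp : p ∈ t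
    · obtain ⟨U, hU, hpU⟩ := ht𝒰 hp
      exact ⟨U, mem_insert_of_mem _ hU, hpU⟩
    · exact ⟨tᶜ, mem_insert _ _, hp⟩
  obtain ⟨𝒱, h𝒱, h𝒱c, hs𝒱⟩ :=
    hs _ (forall_mem_insert.2 ⟨ht.isOpen_compl, h𝒰⟩) hcover
  refine ⟨𝒱 \ {tᶜ}, fun V hV => (h𝒱 hV.1).resolve_left hV.2,
    (mk_le_mk_of_subset sdiff_subset).trans_lt h𝒱c, fun p hp => ?_⟩
  obtain ⟨V, hV, hpV⟩ := hs𝒱 (hts hp)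
  exact ⟨V, ⟨hV, fun hVt => (hVt ▸ hpV) hp⟩, hpV⟩

theorem lindelofNumber_spec (P : Type u) [TopologicalSpace P] :
    ℵ₀ ≤ lindelofNumber P ∧ ∀ U : Set (Set P), (∀ u ∈ U, IsOpen u) → ⋃₀ U = Set.univ →
      ∃ V ⊆ U, #V ≤ lindelofNumber P ∧ ⋃₀ V = Set.univ :=
  csInf_mem (s := {κ | ℵ₀ ≤ κ ∧ _}) ⟨max ℵ₀ #(Set P), le_max_left _ _,
    fun U _ hU => ⟨U, subset_rfl, (mk_set_le U).trans (le_max_right _ _), hU⟩⟩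

theorem isLindelofLT_univ_of_lindelofNumber_lt (h : lindelofNumber P < c) :
    IsLindelofLT c (univ : Set P) := fun 𝒰 h𝒰 hcover => by
  obtain ⟨𝒱, h𝒱, h𝒱c, hV⟩ := (lindelofNumber_spec P).2 𝒰 h𝒰 (univ_subset_iff.1 hcover)
  exact ⟨𝒱, h𝒱, h𝒱c.trans_lt h, hV.symm.subset⟩

end Lindelof

section Pseudocharacter

variable {X : Type u} [TopologicalSpace X] {c : Cardinal.{u}}

def HasPseudocharacterLT (c : Cardinal.{u}) (X : Type u) [TopologicalSpace X] : Prop :=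
  ∀ x : X, ∃ 𝒰 : Set (Set X), #𝒰 < c ∧ (∀ U ∈ 𝒰, IsOpen U ∧ x ∈ U) ∧ ⋂₀ 𝒰 = {x}

theorem pseudocharacter_spec (X : Type u) [TopologicalSpace X] :
    ℵ₀ ≤ pseudocharacter X ∧ ∀ x : X, ∃ 𝒰 : Set (Set X), #𝒰 ≤ pseudocharacter X ∧
      (∀ U ∈ 𝒰, IsOpen U ∧ x ∈ U) ∧ ⋂₀ 𝒰 = ⋂₀ {U : Set X | IsOpen U ∧ x ∈ U} :=
  csInf_mem (s := {κ | ℵ₀ ≤ κ ∧ _}) ⟨max ℵ₀ #(Set X), le_max_left _ _,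
    fun _ => ⟨_, (mk_set_le _).trans (le_max_right _ _), fun _ hU => hU, rfl⟩⟩

theorem hasPseudocharacterLT_of_pseudocharacter_lt [T1Space X] (h : pseudocharacter X < c) :
    HasPseudocharacterLT c X := fun x => by
  obtain ⟨𝒰, h𝒰c, h𝒰, hx⟩ := (pseudocharacter_spec X).2 x
  refine ⟨𝒰, h𝒰c.trans_lt h, h𝒰, hx.trans (Subset.antisymm (fun y hy => ?_) ?_)⟩
  · by_contra hyx
    exact hy {y}ᶜ ⟨isOpen_compl_singleton, Ne.symm hyx⟩ rfl
  · exact singleton_subset_iff.2 fun U hU => hU.2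

theorem exists_isOpen_le_mk_diff (hc : c.IsRegular) (hψ : HasPseudocharacterLT c X) (x : X)
    {T : Set X} (hT : c ≤ #T) : ∃ U, IsOpen U ∧ x ∈ U ∧ c ≤ #↥(T \ U) := by
  obtain ⟨𝒰, h𝒰c, h𝒰, hx⟩ := hψ x
  have hcover : T \ {x} ⊆ ⋃ U ∈ 𝒰, T \ U := fun y hy => by
    have : y ∉ ⋂₀ 𝒰 := hx ▸ hy.2
    obtain ⟨U, hU, hyU⟩ := not_forall₂.1 this
    exact mem_biUnion hU ⟨hy.1, hyU⟩
  obtain ⟨U, hU, hTU⟩ := exists_le_mk_of_subset_biUnion hc h𝒰c (le_mk_diff_singleton hc hT x)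
    hcover
  exact ⟨U, (h𝒰 U hU).1, (h𝒰 U hU).2, hTU⟩

theorem le_mk_inter_of_clusterPt (hc : c.IsRegular) {T : Set X} {x : X}
    (hx : ClusterPt x (cocardinal X hc ⊓ 𝓟 T)) {s : Set X} (hs : s ∈ 𝓝 x) :
    c ≤ #↥(T ∩ s) := by
  refine (cocardinal_inf_principal_neBot_iff (hreg := hc)).1 (hx.neBot.mono ?_)
  exact le_inf (inf_le_right.trans inf_le_left) (le_principal_iff.2 (inter_mem
    (mem_inf_of_right (mem_inf_of_right (mem_principal_self T))) (mem_inf_of_left hs)))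

end Pseudocharacter

theorem FunctionallyHausdorff.t25Space_s5 {X : Type u} [TopologicalSpace X]
    (hX : FunctionallyHausdorff X) : T25Space X := by
  refine T25Space.of_injective_continuous (f := fun x (f : C(X, unitInterval)) => f x)
    (fun x y hxy => ?_) (continuous_pi fun f => f.continuous)
  by_contra hne
  obtain ⟨f, hf, hfx, hfy⟩ := hX x y hne
  have := congrFun hxy ⟨f, hf⟩
  simp only [ContinuousMap.coe_mk, hfx, hfy] at this
  exact zero_ne_one this

def growTree {α : Type*} (root : α) (split : α → ℕ → Bool → α) : List Bool → α
  | [] => root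
  | b :: l => split (growTree root split l) l.length b

section Scheme

variable {P K X : Type u} [TopologicalSpace K] {c : Cardinal.{u}} {e : P → K} {g : P → X}

theorem continuum_le_mk_of_cantorScheme [CompactSpace K] {G : ℕ → Set K}
    (heG : range e = ⋂ n, G n) {A : List Bool → Set K} (hA : ∀ l, IsClosed (A l) ∧ (A l).Nonempty)
    (hanti : CantorScheme.Antitone A) (hAG : ∀ l b, A (b :: l) ⊆ G l.length)
    (hdisj : CantorScheme.Disjoint fun l => g '' (e ⁻¹' A l)) : 𝔠 ≤ #X := by
  have hdom : (CantorScheme.inducedMap fun l => g '' (e ⁻¹' A l)).1 = Set.univ := by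
    refine eq_univ_of_forall fun x => ?_
    obtain ⟨q, hq⟩ := IsCompact.nonempty_iInter_of_sequence_nonempty_isCompact_isClosed
      (fun n => A (res x n)) (fun n => hanti _ _) (fun n => (hA _).2) (hA _).1.isCompact
      (fun n => (hA _).1)
    rw [mem_iInter] at hq
    have hqG (n : ℕ) : q ∈ G n := res_length x n ▸ hAG (res x n) (x n) (hq (n + 1))
    obtain ⟨p, rfl⟩ : q ∈ range e := heG ▸ mem_iInter.2 hqG
    exact ⟨g p, mem_iInter.2 fun n => ⟨p, hq n, rfl⟩⟩
  have := lift_mk_le_lift_mk_of_injective hdisj.map_injective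
  rw [hdom, mk_univ] at this
  simpa using this

variable [TopologicalSpace P]

theorem exists_isClosed_subset_inter_le_mk (hc : c.IsRegular) [RegularSpace K]
    (he : Continuous e) (hL : IsLindelofLT c (univ : Set P)) {C : Set K} (hC : IsClosed C)
    (hCc : c ≤ #(g '' (e ⁻¹' C))) {W : Set K} (hW : IsOpen W) (heW : range e ⊆ W) :
    ∃ C' ⊆ C ∩ W, IsClosed C' ∧ c ≤ #(g '' (e ⁻¹' C')) := by
  set 𝒰 := (fun V => e ⁻¹' interior V) '' {V | IsClosed V ∧ V ⊆ W}
  have hcover : e ⁻¹' C ⊆ ⋃₀ 𝒰 := fun p _ => by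
    obtain ⟨V, hV, hVc, hVW⟩ := exists_mem_nhds_isClosed_subset (hW.mem_nhds (heW ⟨p, rfl⟩))
    exact ⟨_, ⟨V, ⟨hVc, hVW⟩, rfl⟩, mem_interior_iff_mem_nhds.2 hV⟩
  obtain ⟨𝒱, h𝒱𝒰, h𝒱c, h𝒱⟩ := (hL.of_isClosed_subset (hC.preimage he) (subset_univ _)) 𝒰
    (by rintro _ ⟨V, -, rfl⟩; exact isOpen_interior.preimage he) hcover
  obtain ⟨O, hO𝒱, hOc⟩ := exists_le_mk_of_subset_biUnion hc h𝒱c hCc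
    (S := fun O => g '' (e ⁻¹' C ∩ O)) (by
      rintro _ ⟨p, hp, rfl⟩
      obtain ⟨O, hO, hpO⟩ := h𝒱 hp
      exact mem_biUnion hO ⟨p, ⟨hp, hpO⟩, rfl⟩)
  obtain ⟨V, ⟨hVc, hVW⟩, rfl⟩ := h𝒱𝒰 hO𝒱
  exact ⟨C ∩ V, inter_subset_inter_right _ hVW, hC.inter hVc,
    hOc.trans (mk_le_mk_of_subset (image_mono fun p hp => ⟨hp.1, interior_subset hp.2⟩))⟩

theorem exists_antitone_isClosed_le_mk (hc : c.IsRegular) [RegularSpace K] (he : Continuous e)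
    (hL : IsLindelofLT c (univ : Set P)) {G : ℕ → Set K} (hGo : ∀ n, IsOpen (G n))
    (heG : ∀ n, range e ⊆ G n) {C : Set K} (hC : IsClosed C) (hCc : c ≤ #(g '' (e ⁻¹' C))) :
    ∃ D : ℕ → Set K, Antitone D ∧
      ∀ n, D n ⊆ C ∩ G n ∧ IsClosed (D n) ∧ c ≤ #(g '' (e ⁻¹' D n)) := by
  let Big := {D : Set K // IsClosed D ∧ c ≤ #(g '' (e ⁻¹' D))}
  have step (D : Big) (n : ℕ) : ∃ D' : Big, D'.1 ⊆ D.1 ∩ G n := by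
    obtain ⟨D', hD', hD'c, hD'big⟩ :=
      exists_isClosed_subset_inter_le_mk hc he hL D.2.1 D.2.2 (hGo n) (heG n)
    exact ⟨⟨D', hD'c, hD'big⟩, hD'⟩
  choose shrink hshrink using step
  let D : ℕ → Big := fun n => Nat.rec (shrink ⟨C, hC, hCc⟩ 0) (fun n D => shrink D (n + 1)) n
  have hanti : Antitone fun n => (D n).1 :=
    antitone_nat_of_succ_le fun n => (hshrink _ _).trans inter_subset_left
  have hDG (n : ℕ) : (D n).1 ⊆ G n := by
    cases n with
    | zero => exact (hshrink _ 0).trans inter_subset_right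
    | succ n => exact (hshrink _ _).trans inter_subset_right
  exact ⟨fun n => (D n).1, hanti, fun n =>
    ⟨subset_inter ((hanti n.zero_le).trans ((hshrink _ 0).trans inter_subset_left)) (hDG n),
      (D n).2⟩⟩

variable [TopologicalSpace X]

theorem exists_isClosed_subset_le_mk_image_subset_closure (he : IsInducing e)
    (hg : Continuous g) {C : Set K} (hC : IsClosed C) {s : Set X}
    (hs : c ≤ #↥(g '' (e ⁻¹' C) ∩ s)) :
    ∃ C' ⊆ C, IsClosed C' ∧ c ≤ #(g '' (e ⁻¹' C')) ∧ g '' (e ⁻¹' C') ⊆ closure s := by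
  set A := e ⁻¹' C ∩ g ⁻¹' s
  refine ⟨closure (e '' A), closure_minimal (image_subset_iff.2 inter_subset_left) hC,
    isClosed_closure, hs.trans (mk_le_mk_of_subset ?_), ?_⟩
  · rintro _ ⟨⟨p, hp, rfl⟩, hps⟩
    exact ⟨p, subset_closure (mem_image_of_mem e ⟨hp, hps⟩), rfl⟩
  · rintro _ ⟨p, hp, rfl⟩
    rw [← he.closure_eq_preimage_closure_image] at hp
    exact closure_mono (image_subset_iff.2 inter_subset_right)
      (image_closure_subset_closure_image hg (mem_image_of_mem g hp))

theorem exists_clusterPt_image (hc : c.IsRegular) [CompactSpace K] [RegularSpace K]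
    (he : IsInducing e) (hg : Continuous g) (hL : IsLindelofLT c (univ : Set P))
    {G : ℕ → Set K} (hGo : ∀ n, IsOpen (G n)) (heG : range e = ⋂ n, G n) {C : Set K}
    (hC : IsClosed C) (hCc : c ≤ #(g '' (e ⁻¹' C))) :
    ∃ p ∈ e ⁻¹' C, ClusterPt (g p) (cocardinal X hc ⊓ 𝓟 (g '' (e ⁻¹' C))) := by
  obtain ⟨D, hanti, hD⟩ := exists_antitone_isClosed_le_mk hc he.continuous hL hGo
    (fun n => heG ▸ iInter_subset G n) hC hCc
  set F : Filter P := ⨅ n, 𝓟 (e ⁻¹' D n) ⊓ comap g (cocardinal X hc)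
  have hF : F.NeBot := by
    refine iInf_neBot_of_directed' (Antitone.directed_ge fun m n hmn => ?_) fun n => ?_
    · exact inf_le_inf_right _ (principal_mono.2 (preimage_mono (hanti hmn)))
    · refine (map_neBot_iff g).1 ?_
      rw [Filter.push_pull, map_principal, inf_comm]
      exact cocardinal_inf_principal_neBot_iff.2 (hD n).2.2
  have hFD (n : ℕ) : map e F ≤ 𝓟 (D n) :=
    map_le_iff_le_comap.2 (by rw [comap_principal]; exact iInf_le_of_le n inf_le_left)
  have hgF : Tendsto g F (cocardinal X hc ⊓ 𝓟 (g '' (e ⁻¹' C))) := by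
    refine tendsto_inf.2 ⟨tendsto_iff_comap.2 (iInf_le_of_le 0 inf_le_right), ?_⟩
    refine tendsto_principal.2 (mem_of_superset (mem_iInf_of_mem 0 (mem_inf_of_left
      (mem_principal_self _))) fun p hp => mem_image_of_mem g ((hD 0).1 hp).1)
  obtain ⟨q, -, hq⟩ := isCompact_univ (f := map e F) (le_principal_iff.2 univ_mem)
  have hqD (n : ℕ) : q ∈ D n :=
    (hD n).2.1.closure_subset (mem_closure_iff_clusterPt.2 (hq.mono (hFD n)))
  obtain ⟨p, rfl⟩ : q ∈ range e := heG ▸ mem_iInter.2 fun n => ((hD n).1 (hqD n)).2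
  exact ⟨p, ((hD 0).1 (hqD 0)).1, (he.mapClusterPt_iff.1 hq).map hg.continuousAt hgF⟩

theorem exists_ne_clusterPt_image (hc : c.IsRegular) [CompactSpace K] [RegularSpace K]
    (he : IsInducing e) (hg : Continuous g) (hL : IsLindelofLT c (univ : Set P))
    (hψ : HasPseudocharacterLT c X) {G : ℕ → Set K} (hGo : ∀ n, IsOpen (G n))
    (heG : range e = ⋂ n, G n) {C : Set K} (hC : IsClosed C) (hCc : c ≤ #(g '' (e ⁻¹' C))) :
    ∃ x₀ x₁, x₀ ≠ x₁ ∧ ClusterPt x₀ (cocardinal X hc ⊓ 𝓟 (g '' (e ⁻¹' C))) ∧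
      ClusterPt x₁ (cocardinal X hc ⊓ 𝓟 (g '' (e ⁻¹' C))) := by
  obtain ⟨p₀, -, hp₀⟩ := exists_clusterPt_image hc he hg hL hGo heG hC hCc
  obtain ⟨U, hU, hp₀U, hCU⟩ := exists_isOpen_le_mk_diff hc hψ (g p₀) hCc
  obtain ⟨C', hC'C, hC', hC'c, hC'U⟩ :=
    exists_isClosed_subset_le_mk_image_subset_closure he hg hC (s := Uᶜ) hCU
  obtain ⟨p₁, hp₁C', hp₁⟩ := exists_clusterPt_image hc he hg hL hGo heG hC' hC'c
  refine ⟨g p₀, g p₁, fun h => ?_, hp₀,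
    hp₁.mono (inf_le_inf_left _ (principal_mono.2 (image_mono (preimage_mono hC'C))))⟩
  rw [hU.isClosed_compl.closure_eq] at hC'U
  exact hC'U (mem_image_of_mem g hp₁C') (h ▸ hp₀U)

theorem exists_disjoint_split (hc : c.IsRegular) [CompactSpace K] [RegularSpace K] [T25Space X]
    (he : IsInducing e) (hg : Continuous g) (hL : IsLindelofLT c (univ : Set P))
    (hψ : HasPseudocharacterLT c X) {G : ℕ → Set K} (hGo : ∀ n, IsOpen (G n))
    (heG : range e = ⋂ n, G n) {C : Set K} (hC : IsClosed C) (hCc : c ≤ #(g '' (e ⁻¹' C))) :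
    ∃ D : Bool → Set K, (∀ b, D b ⊆ C ∧ IsClosed (D b) ∧ c ≤ #(g '' (e ⁻¹' D b))) ∧
      Disjoint (g '' (e ⁻¹' D true)) (g '' (e ⁻¹' D false)) := by
  obtain ⟨x₀, x₁, hx, hx₀, hx₁⟩ := exists_ne_clusterPt_image hc he hg hL hψ hGo heG hC hCc
  obtain ⟨s₀, hs₀, s₁, hs₁, hs⟩ := exists_nhds_disjoint_closure hx
  obtain ⟨C₀, hC₀C, hC₀, hC₀c, hC₀s⟩ := exists_isClosed_subset_le_mk_image_subset_closure he hg
    hC (le_mk_inter_of_clusterPt hc hx₀ hs₀)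
  obtain ⟨C₁, hC₁C, hC₁, hC₁c, hC₁s⟩ := exists_isClosed_subset_le_mk_image_subset_closure he hg
    hC (le_mk_inter_of_clusterPt hc hx₁ hs₁)
  exact ⟨fun b => cond b C₀ C₁, Bool.forall_bool.2 ⟨⟨hC₁C, hC₁, hC₁c⟩, ⟨hC₀C, hC₀, hC₀c⟩⟩,
    hs.mono hC₀s hC₁s⟩

theorem exists_cantorScheme (hc : c.IsRegular) [CompactSpace K] [RegularSpace K] [T25Space X]
    (he : IsInducing e) (hg : Continuous g) (hL : IsLindelofLT c (univ : Set P))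
    (hψ : HasPseudocharacterLT c X) {G : ℕ → Set K} (hGo : ∀ n, IsOpen (G n))
    (heG : range e = ⋂ n, G n) {C : Set K} (hC : IsClosed C) (hCc : c ≤ #(g '' (e ⁻¹' C))) :
    ∃ A : List Bool → Set K, (∀ l, IsClosed (A l) ∧ (A l).Nonempty) ∧
      CantorScheme.Antitone A ∧ (∀ l b, A (b :: l) ⊆ G l.length) ∧
      CantorScheme.Disjoint fun l => g '' (e ⁻¹' A l) := by
  let Big := {D : Set K // IsClosed D ∧ c ≤ #(g '' (e ⁻¹' D))}
  have step (D : Big) (n : ℕ) : ∃ D' : Bool → Big, (∀ b, (D' b).1 ⊆ D.1 ∩ G n) ∧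
      Disjoint (g '' (e ⁻¹' (D' true).1)) (g '' (e ⁻¹' (D' false).1)) := by
    obtain ⟨D₀, hD₀, hD₀c, hD₀big⟩ := exists_isClosed_subset_inter_le_mk hc he.continuous hL
      D.2.1 D.2.2 (hGo n) (heG ▸ iInter_subset G n)
    obtain ⟨D', hD', hdisj⟩ := exists_disjoint_split hc he hg hL hψ hGo heG hD₀c hD₀big
    exact ⟨fun b => ⟨D' b, (hD' b).2⟩, fun b => (hD' b).1.trans hD₀, hdisj⟩
  choose split hsplit hdisj using step
  let tree := growTree ⟨C, hC, hCc⟩ split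
  refine ⟨fun l => (tree l).1, fun l => ⟨(tree l).2.1, ?_⟩,
    fun l b => (hsplit _ _ b).trans inter_subset_left,
    fun l b => (hsplit _ _ b).trans inter_subset_right, fun l a b hab => ?_⟩
  · obtain ⟨_, p, hp, -⟩ := mk_set_ne_zero_iff.1
      (aleph0_pos.trans_le (hc.aleph0_le.trans (tree l).2.2)).ne'
    exact ⟨e p, hp⟩
  · cases a <;> cases b
    · exact absurd rfl hab
    · exact (hdisj _ _).symm
    · exact hdisj _ _
    · exact absurd rfl hab

theorem continuum_le_mk_of_isGδ_range (hc : c.IsRegular) [CompactSpace K] [RegularSpace K]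
    [T25Space X] (he : IsInducing e) (hQ : IsGδ (range e)) (hg : Continuous g)
    (hgs : Function.Surjective g) (hL : IsLindelofLT c (univ : Set P))
    (hψ : HasPseudocharacterLT c X) (hX : c ≤ #X) : 𝔠 ≤ #X := by
  obtain ⟨G, hGo, heG⟩ := isGδ_iff_eq_iInter_nat.1 hQ
  have huniv : c ≤ #(g '' (e ⁻¹' univ)) := by
    rwa [preimage_univ, image_univ, hgs.range_eq, mk_univ]
  obtain ⟨A, hA, hanti, hAG, hdisj⟩ :=
    exists_cantorScheme hc he hg hL hψ hGo heG isClosed_univ huniv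
  exact continuum_le_mk_of_cantorScheme heG hA hanti hAG hdisj

end Scheme

theorem stmt5 {X P : Type u} [TopologicalSpace X] [TopologicalSpace P]
    (hX : FunctionallyHausdorff X) (hP : IsCechComplete P)
    (g : P → X) (hg : Continuous g) (hgs : Function.Surjective g) :
    #X ≤ max (lindelofNumber P) (pseudocharacter X) ∨ Cardinal.continuum ≤ #X := by
  refine or_iff_not_imp_left.2 fun hlt => ?_
  -- `≤ κ` is recast as `< κ⁺`, with `κ⁺` regular.
  obtain ⟨K, _, e, _, _, he, -, hQ⟩ := hP
  have := hX.t25Space_s5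
  have hκ : ℵ₀ ≤ max (lindelofNumber P) (pseudocharacter X) :=
    le_max_of_le_left (lindelofNumber_spec P).1
  exact continuum_le_mk_of_isGδ_range (Cardinal.isRegular_succ hκ) he.isInducing hQ hg hgs
    (isLindelofLT_univ_of_lindelofNumber_lt (Order.lt_succ_of_le (le_max_left _ _)))
    (hasPseudocharacterLT_of_pseudocharacter_lt (Order.lt_succ_of_le (le_max_right _ _)))
    (Order.succ_le_of_lt (not_le.1 hlt))
end

section
/- Every analytic functionally Hausdorff space X has cardinality that is either at most countable or exactly 𝔠 (the cardinality of the continuum). -/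
open Cardinal Set Topology

universe u

/-!
A functionally Hausdorff space is Hausdorff, and `X` is a continuous image `g(P)` of a Polish
space, so `#X ≤ #P ≤ 𝔠`. If `X` is uncountable, we run the perfect set argument on `P` while
keeping track of images under `g`: the points of `P` all of whose neighbourhoods have
uncountable image form a closed set `K` whose complement has countable image (Lindelöf).
Inside `K` every relatively open piece again has uncountable image, so it contains two points
with distinct images, which Hausdorffness separates; iterating yields a Cantor scheme in `P`
whose branches have pairwise disjoint images, i.e. an injection of `ℕ → Bool` into `X`.
-/

open Function Metric CantorScheme

theorem CantorScheme.Disjoint.eq_of_forall_mem {α β : Type*} {A : List β → Set α}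
    (hA : CantorScheme.Disjoint A) {x y : ℕ → β} {z : α} (hx : ∀ n, z ∈ A (PiNat.res x n))
    (hy : ∀ n, z ∈ A (PiNat.res y n)) : x = y := by
  apply PiNat.res_injective
  ext n : 1
  induction n with
  | zero => rfl
  | succ n ih =>
    have hx' := hx (n + 1)
    have hy' := hy (n + 1)
    simp only [PiNat.res_succ, ih] at hx' hy' ⊢
    congr 1
    by_contra hne
    exact (hA _ hne).ne_of_mem hx' hy' rfl

section Scheme

variable {P Y : Type*} [MetricSpace P] [CompleteSpace P]

theorem exists_injective_comp_of_cantorScheme {F : P → Y} (D : List Bool → Set P)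
    (hclosed : ∀ l, IsClosed (D l)) (hne : ∀ l, (D l).Nonempty)
    (hanti : CantorScheme.Antitone D) (hdiam : VanishingDiam D)
    (hdisj : CantorScheme.Disjoint fun l => F '' D l) :
    ∃ f : (ℕ → Bool) → P, Injective (F ∘ f) := by
  have hdom : ∀ x, x ∈ (inducedMap D).1 := by
    rw [(hanti.closureAntitone hclosed).map_of_vanishingDiam hdiam hne]
    exact mem_univ
  refine ⟨fun x => (inducedMap D).2 ⟨x, hdom x⟩, fun x y hxy => ?_⟩
  refine hdisj.eq_of_forall_mem (z := F ((inducedMap D).2 ⟨x, hdom x⟩))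
    (fun n => mem_image_of_mem F (map_mem _ n)) (fun n => ?_)
  rw [show F _ = F _ from hxy]
  exact mem_image_of_mem F (map_mem _ n)

end Scheme

section Condensation

variable {P Y : Type*} [TopologicalSpace P] (F : P → Y)

def condensationKernel : Set P := {p | ∀ U ∈ 𝓝 p, ¬(F '' U).Countable}

def CondensedUnder (S : Set P) : Prop := ∀ p ∈ S, ∀ U ∈ 𝓝 p, ¬(F '' (U ∩ S)).Countable

theorem isClosed_condensationKernel : IsClosed (condensationKernel F) := by
  rw [← isOpen_compl_iff, isOpen_iff_mem_nhds]
  intro p hp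
  simp only [condensationKernel, mem_compl_iff, mem_ofPred_eq, not_forall, not_not] at hp
  obtain ⟨U, hU, hcount⟩ := hp
  filter_upwards [eventually_mem_nhds_iff.2 hU] with q hq
  exact fun hq' => hq' U hq hcount

variable {F} in
theorem CondensedUnder.closure_inter {S W : Set P} (hS : CondensedUnder F S) (hW : IsOpen W) :
    CondensedUnder F (closure (W ∩ S)) := by
  intro p hp U hU
  obtain ⟨q, hqU, hqW, hqS⟩ :=
    mem_closure_iff.1 hp (interior U) isOpen_interior (mem_interior_iff_mem_nhds.2 hU)
  refine fun hcount => hS q hqS (interior U ∩ W)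
    ((isOpen_interior.inter hW).mem_nhds ⟨hqU, hqW⟩) (hcount.mono (image_mono ?_))
  rintro r ⟨⟨hrU, hrW⟩, hrS⟩
  exact ⟨interior_subset hrU, subset_closure ⟨hrW, hrS⟩⟩

variable [HereditarilyLindelofSpace P]

theorem countable_image_compl_condensationKernel : (F '' (condensationKernel F)ᶜ).Countable := by
  have hsmall : ∀ p ∈ (condensationKernel F)ᶜ, ∃ U ∈ 𝓝 p, (F '' U).Countable := by
    simp [condensationKernel]
  choose! U hU hcount using hsmall
  obtain ⟨t, htc, hts, hcover⟩ :=
    (HereditarilyLindelofSpace.isLindelof _).elim_nhds_subcover U hU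
  refine (htc.biUnion fun p hp => hcount p (hts p hp)).mono ?_
  simpa only [image_iUnion₂] using image_mono hcover

theorem condensedUnder_condensationKernel :
    CondensedUnder F (condensationKernel F) := by
  intro p hp U hU hcount
  refine hp U hU ((hcount.union (countable_image_compl_condensationKernel F)).mono ?_)
  rw [← image_union]
  exact image_mono fun q hq => (em (q ∈ condensationKernel F)).imp (fun h => ⟨hq, h⟩) id

theorem condensationKernel_nonempty (h : ¬(range F).Countable) :
    (condensationKernel F).Nonempty := by
  refine nonempty_iff_ne_empty.2 fun hK => h ?_
  rw [← image_univ, ← compl_empty, ← hK]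
  exact countable_image_compl_condensationKernel F

end Condensation

section Splitting

open scoped ENNReal

variable {P Y : Type*} [MetricSpace P] {F : P → Y} {S : Set P}

theorem CondensedUnder.exists_small_closed_subset (hS : CondensedUnder F S) (hSc : IsClosed S)
    {q : P} (hq : q ∈ S) {U : Set P} (hU : U ∈ 𝓝 q) {ε : ℝ≥0∞} (hε : 0 < ε) :
    ∃ T ⊆ S, (IsClosed T ∧ T.Nonempty ∧ CondensedUnder F T) ∧ ediam T ≤ ε ∧ T ⊆ U := by
  obtain ⟨C, hC, hCc, hCsub⟩ := exists_mem_nhds_isClosed_subset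
    (Filter.inter_mem hU (eball_mem_nhds q (ENNReal.half_pos hε.ne')))
  have hTC : closure (interior C ∩ S) ⊆ C :=
    closure_minimal (inter_subset_left.trans interior_subset) hCc
  refine ⟨closure (interior C ∩ S), closure_minimal inter_subset_right hSc,
    ⟨isClosed_closure, ⟨q, subset_closure ⟨mem_interior_iff_mem_nhds.2 hC, hq⟩⟩,
      hS.closure_inter isOpen_interior⟩, ?_, hTC.trans (hCsub.trans inter_subset_left)⟩
  calc ediam (closure (interior C ∩ S)) ≤ ediam (eball q (ε / 2)) :=
        ediam_mono (hTC.trans (hCsub.trans inter_subset_right))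
    _ ≤ 2 * (ε / 2) := ediam_eball_le
    _ = ε := ENNReal.mul_div_cancel two_ne_zero ENNReal.ofNat_ne_top

variable [TopologicalSpace Y] [T2Space Y]

theorem CondensedUnder.exists_split (hF : Continuous F) (hS : CondensedUnder F S)
    (hSc : IsClosed S) (hne : S.Nonempty) {ε : ℝ≥0∞} (hε : 0 < ε) :
    ∃ T : Bool → Set P,
      (∀ b, T b ⊆ S ∧ (IsClosed (T b) ∧ (T b).Nonempty ∧ CondensedUnder F (T b)) ∧
        ediam (T b) ≤ ε) ∧ Disjoint (F '' T false) (F '' T true) := by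
  obtain ⟨p, hp⟩ := hne
  have hmany : ¬(F '' S).Subsingleton := fun h =>
    hS p hp univ Filter.univ_mem (by simpa using h.countable)
  obtain ⟨_, ⟨p₀, hp₀, rfl⟩, _, ⟨p₁, hp₁, rfl⟩, hdiff⟩ := not_subsingleton_iff.1 hmany
  obtain ⟨V₀, V₁, hV₀, hV₁, hpV₀, hpV₁, hV⟩ := t2_separation hdiff
  obtain ⟨T₀, hT₀S, hT₀, hT₀ε, hT₀V⟩ :=
    hS.exists_small_closed_subset hSc hp₀ ((hV₀.preimage hF).mem_nhds hpV₀) hε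
  obtain ⟨T₁, hT₁S, hT₁, hT₁ε, hT₁V⟩ :=
    hS.exists_small_closed_subset hSc hp₁ ((hV₁.preimage hF).mem_nhds hpV₁) hε
  refine ⟨fun b => cond b T₁ T₀, fun b => ?_,
    hV.mono (image_subset_iff.2 hT₀V) (image_subset_iff.2 hT₁V)⟩
  cases b
  exacts [⟨hT₀S, hT₀, hT₀ε⟩, ⟨hT₁S, hT₁, hT₁ε⟩]

theorem CondensedUnder.exists_nat_bool_injective_comp [CompleteSpace P] (hF : Continuous F)
    (hS : CondensedUnder F S) (hSc : IsClosed S) (hne : S.Nonempty) :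
    ∃ f : (ℕ → Bool) → P, Injective (F ∘ f) := by
  choose! T hT hdisj using fun (S : Set P) (h : IsClosed S ∧ S.Nonempty ∧ CondensedUnder F S)
    (ε : ℝ≥0∞) (hε : 0 < ε) => h.2.2.exists_split hF h.1 h.2.1 hε
  have hεpos : ∀ n : ℕ, 0 < ((n + 1 : ℕ) : ℝ≥0∞)⁻¹ := fun n => by simp
  let D : List Bool → Set P := fun l => l.rec S fun b l D => T D ((l.length + 1 : ℕ) : ℝ≥0∞)⁻¹ b
  -- at the root the diameter bound is `(0 : ℝ≥0∞)⁻¹ = ⊤`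
  have hD : ∀ l, (IsClosed (D l) ∧ (D l).Nonempty ∧ CondensedUnder F (D l)) ∧
      ediam (D l) ≤ (l.length : ℝ≥0∞)⁻¹ := by
    intro l
    induction l with
    | nil => simp [D, hSc, hne, hS]
    | cons b l ih => exact (hT _ ih.1 _ (hεpos l.length) b).2
  refine exists_injective_comp_of_cantorScheme D (fun l => (hD l).1.1) (fun l => (hD l).1.2.1)
    (fun l b => (hT _ (hD l).1 _ (hεpos _) b).1) (fun x => ?_) ?_
  · refine tendsto_of_tendsto_of_tendsto_of_le_of_le tendsto_const_nhds
      ENNReal.tendsto_inv_nat_nhds_zero (fun _ => zero_le) fun n => ?_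
    simpa using (hD (PiNat.res x n)).2
  · rintro l (_ | _) (_ | _) hab
    exacts [(hab rfl).elim, hdisj _ (hD l).1 _ (hεpos _), (hdisj _ (hD l).1 _ (hεpos _)).symm,
      (hab rfl).elim]

end Splitting

theorem exists_nat_bool_injective_comp_of_not_countable_range {P Y : Type*} [TopologicalSpace P]
    [PolishSpace P] [TopologicalSpace Y] [T2Space Y] {F : P → Y} (hF : Continuous F)
    (h : ¬(range F).Countable) : ∃ f : (ℕ → Bool) → P, Injective (F ∘ f) := by
  let := TopologicalSpace.upgradeIsCompletelyMetrizable P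
  exact (condensedUnder_condensationKernel F).exists_nat_bool_injective_comp hF
    (isClosed_condensationKernel F) (condensationKernel_nonempty F h)

theorem PolishSpace.mk_le_continuum (P : Type u) [TopologicalSpace P] [PolishSpace P] :
    #P ≤ 𝔠 := by
  rcases isEmpty_or_nonempty P with hP | hP
  · simp
  obtain ⟨f, -, hf⟩ := PolishSpace.exists_nat_nat_continuous_surjective P
  simpa using lift_mk_le_lift_mk_of_surjective hf

theorem FunctionallyHausdorff.t2Space {X : Type u} [TopologicalSpace X]
    (hX : FunctionallyHausdorff X) : T2Space X := by
  refine ⟨fun x y hxy => ?_⟩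
  obtain ⟨f, hf, hfx, hfy⟩ := hX x y hxy
  exact separated_by_continuous hf (by rw [hfx, hfy]; exact zero_ne_one)

theorem stmt6 {X : Type u} [TopologicalSpace X]
    (hX : FunctionallyHausdorff X) (hA : IsAnalyticSpace X) :
    #X ≤ ℵ₀ ∨ #X = Cardinal.continuum := by
  refine or_iff_not_imp_left.2 fun hunc => ?_
  obtain ⟨P, _, _, g, hg, hgs⟩ := hA
  have := hX.t2Space
  refine le_antisymm ((mk_le_of_surjective hgs).trans (PolishSpace.mk_le_continuum P)) ?_
  have hrange : ¬(range g).Countable := by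
    rwa [hgs.range_eq, countable_univ_iff, ← mk_le_aleph0_iff]
  obtain ⟨f, hf⟩ := exists_nat_bool_injective_comp_of_not_countable_range hg hrange
  simpa using lift_mk_le_lift_mk_of_injective hf
end

section
/- A functionally Hausdorff K-analytic space X is at most countable if and only if X has countable pseudocharacter and every compact subset of X is at most countable. -/
open Cardinal Set Topology

universe u

section Aux
variable {X : Type u} [TopologicalSpace X]

lemma FH_sep (hX : FunctionallyHausdorff X) {x y : X} (h : y ≠ x) :
    ∃ U : Set X, IsOpen U ∧ x ∈ U ∧ y ∉ U := by
  obtain ⟨f, hf, hfx, hfy⟩ := hX x y h.symm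
  refine ⟨(fun u => (f u : ℝ)) ⁻¹' Iio (1/2), (isOpen_Iio).preimage (continuous_subtype_val.comp hf), ?_, ?_⟩
  · simp only [mem_preimage, mem_Iio, hfx]
    norm_num
  · simp only [mem_preimage, mem_Iio, hfy, not_lt]
    norm_num

lemma FH_inter (hX : FunctionallyHausdorff X) (x : X) :
    ⋂₀ {U : Set X | IsOpen U ∧ x ∈ U} = {x} := by
  apply Subset.antisymm
  · intro y hy
    by_contra hyx
    obtain ⟨U, hU, hxU, hyU⟩ := FH_sep hX (show y ≠ x from hyx)
    exact hyU (hy U ⟨hU, hxU⟩)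
  · rintro y rfl U ⟨_, hxU⟩
    exact hxU

lemma psi_seq (hX : FunctionallyHausdorff X) (hψ : pseudocharacter X ≤ ℵ₀) (x : X) :
    ∃ U : ℕ → Set X, (∀ n, IsOpen (U n)) ∧ (∀ n, x ∈ U n) ∧ (⋂ n, U n) = {x} := by
  set S := {κ : Cardinal.{u} | ℵ₀ ≤ κ ∧ ∀ x : X, ∃ 𝒰 : Set (Set X),
    #↥𝒰 ≤ κ ∧ (∀ U ∈ 𝒰, IsOpen U ∧ x ∈ U) ∧ ⋂₀ 𝒰 = ⋂₀ {U : Set X | IsOpen U ∧ x ∈ U}} with hS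
  have hSne : S.Nonempty := by
    refine ⟨max ℵ₀ (2 ^ #X), le_max_left _ _, fun z => ?_⟩
    refine ⟨{U : Set X | IsOpen U ∧ z ∈ U}, ?_, fun U hU => hU, rfl⟩
    calc #↥{U : Set X | IsOpen U ∧ z ∈ U} ≤ #(Set X) := Cardinal.mk_set_le _
      _ = 2 ^ #X := Cardinal.mk_set
      _ ≤ max ℵ₀ (2 ^ #X) := le_max_right _ _
  have hmem : sInf S ∈ S := csInf_mem hSne
  obtain ⟨𝒰, h𝒰κ, h𝒰o, h𝒰i⟩ := hmem.2 x
  have h𝒰c : 𝒰.Countable := by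
    exact (Cardinal.le_aleph0_iff_set_countable).mp (h𝒰κ.trans hψ)
  have h𝒰c' : (insert Set.univ 𝒰 : Set (Set X)).Countable := h𝒰c.insert _
  obtain ⟨U, hU⟩ := h𝒰c'.exists_eq_range (insert_nonempty _ _)
  refine ⟨U, ?_, ?_, ?_⟩
  · intro n
    have : U n ∈ insert (Set.univ : Set X) 𝒰 := hU ▸ mem_range_self n
    rcases this with h | h
    · simp [h]
    · exact (h𝒰o _ h).1
  · intro n
    have : U n ∈ insert (Set.univ : Set X) 𝒰 := hU ▸ mem_range_self n
    rcases this with h | h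
    · simp [h]
    · exact (h𝒰o _ h).2
  · have : (⋂ n, U n) = ⋂₀ (insert (Set.univ : Set X) 𝒰) := by rw [hU, sInter_range]
    rw [this, sInter_insert, h𝒰i, FH_inter hX x, univ_inter]

lemma not_countable_nat_bool : ¬ Countable (ℕ → Bool) := by
  intro h
  classical
  have hj : Function.Injective (fun (s : Set ℕ) (n : ℕ) => decide (n ∈ s)) := by
    intro s t hst
    ext n
    have h2 := congrFun hst n
    simp only [decide_eq_decide] at h2
    exact h2
  have : Countable (Set ℕ) := hj.countable
  obtain ⟨g, hg⟩ := (countable_iff_exists_injective (Set ℕ)).mp this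
  exact Function.cantor_injective g hg

end Aux

section Core
variable {X P K : Type u} [TopologicalSpace X] [TopologicalSpace P] [TopologicalSpace K]
  [CompactSpace K] [T2Space K] [LindelofSpace P]
  {e : P → K} {f : P → X}

lemma shrink_lemma (he : IsEmbedding e) (hf : Continuous f)
    {Gn : Set K} (hGn : IsOpen Gn) (hr : Set.range e ⊆ Gn)
    {F : Set K} (hF : IsClosed F) (hA : ¬ (f '' (e ⁻¹' F)).Countable) :
    ∃ F', IsClosed F' ∧ F' ⊆ F ∧ F' ⊆ Gn ∧ ¬ (f '' (e ⁻¹' F')).Countable := by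
  set S := e ⁻¹' F with hSdef
  have hS : IsClosed S := hF.preimage he.continuous
  have hSL : IsLindelof S := hS.isLindelof
  have hchoice : ∀ q : S, ∃ C : Set K, C ∈ 𝓝 (e (q : P)) ∧ IsClosed C ∧ C ⊆ Gn := fun q =>
    exists_mem_nhds_isClosed_subset (hGn.mem_nhds (hr (mem_range_self _)))
  choose C hC1 hC2 hC3 using hchoice
  have hcov : S ⊆ ⋃ q : S, e ⁻¹' interior (C q) := by
    intro p hp
    exact mem_iUnion.mpr ⟨⟨p, hp⟩, mem_preimage.mpr (mem_interior_iff_mem_nhds.mpr (hC1 ⟨p, hp⟩))⟩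
  obtain ⟨r, hrc, hrcov⟩ := hSL.elim_countable_subcover _
    (fun q => isOpen_interior.preimage he.continuous) hcov
  have hsub : f '' S ⊆ ⋃ q ∈ r, f '' (S ∩ e ⁻¹' (C q)) := by
    rintro _ ⟨p, hp, rfl⟩
    obtain ⟨q, hq, hpq⟩ := mem_iUnion₂.mp (hrcov hp)
    exact mem_iUnion₂.mpr ⟨q, hq, mem_image_of_mem f ⟨hp, show e p ∈ C q from interior_subset hpq⟩⟩
  by_contra hcon
  push_neg at hcon
  apply hA
  have : ∀ q ∈ r, (f '' (S ∩ e ⁻¹' (C q))).Countable := by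
    intro q hq
    by_contra hunc
    have h1 : IsClosed (F ∩ C q) := hF.inter (hC2 q)
    have h2 : F ∩ C q ⊆ F := inter_subset_left
    have h3 : F ∩ C q ⊆ Gn := fun z hz => hC3 q hz.2
    have h4 : e ⁻¹' (F ∩ C q) = S ∩ e ⁻¹' (C q) := rfl
    exact hunc (h4 ▸ hcon (F ∩ C q) h1 h2 h3)
  exact (Set.Countable.biUnion hrc this).mono hsub

lemma refine_lemma (he : IsEmbedding e) (hf : Continuous f) {F : Set K} (hF : IsClosed F)
    {s : Set X} (hs : IsClosed s) (hcnt : ¬ (f '' (e ⁻¹' F) ∩ s).Countable) :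
    ∃ F', IsClosed F' ∧ F' ⊆ F ∧ (∀ q ∈ e ⁻¹' F', f q ∈ s) ∧
      ¬ (f '' (e ⁻¹' F')).Countable := by
  refine ⟨closure (e '' (e ⁻¹' F ∩ f ⁻¹' s)), isClosed_closure, ?_, ?_, ?_⟩
  · calc closure (e '' (e ⁻¹' F ∩ f ⁻¹' s)) ⊆ closure F := by
          apply closure_mono; rintro _ ⟨q, ⟨hq, _⟩, rfl⟩; exact hq
      _ = F := hF.closure_eq
  · intro q hq
    have h1 : q ∈ closure (e ⁻¹' F ∩ f ⁻¹' s) := by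
      rw [he.closure_eq_preimage_closure_image]
      exact hq
    have h2 : q ∈ f ⁻¹' s :=
      closure_minimal inter_subset_right (hs.preimage hf) h1
    exact h2
  · intro hcount
    apply hcnt
    apply hcount.mono
    rintro x ⟨⟨q, hq, rfl⟩, hxs⟩
    exact mem_image_of_mem f (subset_closure (mem_image_of_mem e ⟨hq, hxs⟩))

lemma split_lemma (hX : FunctionallyHausdorff X)
    (hψseq : ∀ x : X, ∃ U : ℕ → Set X, (∀ n, IsOpen (U n)) ∧ (∀ n, x ∈ U n) ∧ (⋂ n, U n) = {x})
    (he : IsEmbedding e) (hf : Continuous f) {F : Set K} (hF : IsClosed F)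
    (hA : ¬ (f '' (e ⁻¹' F)).Countable) :
    ∃ g : X → ℝ, Continuous g ∧
      ¬ (f '' (e ⁻¹' F) ∩ g ⁻¹' (Iic (1/3 : ℝ))).Countable ∧
      ¬ (f '' (e ⁻¹' F) ∩ g ⁻¹' (Ici (2/3 : ℝ))).Countable := by
  classical
  set A := f '' (e ⁻¹' F) with hAdef
  set Heavy : X → Prop :=
    fun x => ∀ g : X → ℝ, Continuous g → g x = 0 → ¬ (A ∩ g ⁻¹' (Iic (1/3 : ℝ))).Countable
    with hHdef
  by_cases hpair : ∃ x y, Heavy x ∧ Heavy y ∧ x ≠ y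
  · obtain ⟨x, y, hx, hy, hxy⟩ := hpair
    obtain ⟨h, hc, hx0, hy1⟩ := hX x y hxy
    have hcc : Continuous fun z => (h z : ℝ) := continuous_subtype_val.comp hc
    refine ⟨fun z => (h z : ℝ), hcc, ?_, ?_⟩
    · exact hx _ hcc (by rw [hx0]; simp)
    · have h2 := hy (fun z => 1 - (h z : ℝ)) (by fun_prop) (show (1:ℝ) - (h y : ℝ) = 0 by rw [hy1]; simp)
      have hseteq : A ∩ (fun z => 1 - (h z : ℝ)) ⁻¹' (Iic (1/3 : ℝ))
          = A ∩ (fun z => (h z : ℝ)) ⁻¹' (Ici (2/3 : ℝ)) := by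
        ext z
        simp only [mem_inter_iff, mem_preimage, mem_Iic, mem_Ici, and_congr_right_iff]
        intro _
        constructor <;> intro <;> linarith
      rw [hseteq] at h2
      exact h2
  · exfalso
    push_neg at hpair
    have hAne : A.Nonempty := by
      rcases A.eq_empty_or_nonempty with h | h
      · exact absurd (h ▸ countable_empty) hA
      · exact h
    obtain ⟨x₀, hx₀⟩ : ∃ x₀ : X, ∀ x, Heavy x → x = x₀ := by
      by_cases hh : ∃ x, Heavy x
      · exact ⟨hh.choose, fun x hx => hpair x hh.choose hx hh.choose_spec⟩
      · push_neg at hh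
        exact ⟨hAne.choose, fun x hx => absurd hx (hh x)⟩
    obtain ⟨U, hUo, hUx, hUi⟩ := hψseq x₀
    apply hA
    have key : ∀ n, (A \ U n).Countable := by
      intro n
      have himg : A \ U n = f '' (e ⁻¹' F ∩ (f ⁻¹' (U n))ᶜ) := by
        ext z
        constructor
        · rintro ⟨⟨q, hq, rfl⟩, hz⟩
          exact ⟨q, ⟨hq, hz⟩, rfl⟩
        · rintro ⟨q, ⟨hq, hq2⟩, rfl⟩
          exact ⟨⟨q, hq, rfl⟩, hq2⟩
      have hclosed : IsClosed (e ⁻¹' F ∩ (f ⁻¹' (U n))ᶜ) :=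
        (hF.preimage he.continuous).inter (isClosed_compl_iff.mpr ((hUo n).preimage hf))
      have hLin : IsLindelof (A \ U n) := himg ▸ hclosed.isLindelof.image hf
      have hns : ∀ x : ↥(A \ U n), ∃ g : X → ℝ, Continuous g ∧ g (x : X) = 0 ∧
          (A ∩ g ⁻¹' (Iic (1/3 : ℝ))).Countable := by
        rintro ⟨x, hxA, hxU⟩
        have hxne : ¬ Heavy x := by
          intro hh
          exact hxU (hx₀ x hh ▸ hUx n)
        have hxne' : ¬ ∀ g : X → ℝ, Continuous g → g x = 0 →
            ¬ (A ∩ g ⁻¹' (Iic (1/3 : ℝ))).Countable := hxne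
        push_neg at hxne'
        obtain ⟨g, hg, hg0, hgc⟩ := hxne'
        exact ⟨g, hg, hg0, hgc⟩
      choose g hgc hg0 hgcnt using hns
      have hcov : (A \ U n) ⊆ ⋃ x : ↥(A \ U n), (g x) ⁻¹' (Iio (1/3 : ℝ)) := by
        intro z hz
        refine mem_iUnion.mpr ⟨⟨z, hz⟩, ?_⟩
        simp only [mem_preimage, mem_Iio, hg0 ⟨z, hz⟩]
        norm_num
      obtain ⟨r, hrc, hrcov⟩ := hLin.elim_countable_subcover _
        (fun x => isOpen_Iio.preimage (hgc x)) hcov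
      have hsub : A \ U n ⊆ ⋃ x ∈ r, (A ∩ (g x) ⁻¹' (Iic (1/3 : ℝ))) := by
        intro z hz
        obtain ⟨x, hxr, hzx⟩ := mem_iUnion₂.mp (hrcov hz)
        refine mem_iUnion₂.mpr ⟨x, hxr, hz.1, ?_⟩
        have : g x z < 1/3 := hzx
        exact le_of_lt this
      exact ((hrc.biUnion fun x _ => hgcnt x).mono hsub)
    have hsub2 : A ⊆ {x₀} ∪ ⋃ n, (A \ U n) := by
      intro z hz
      by_cases hzx : z = x₀
      · exact Or.inl (by simp [hzx])
      · have : z ∉ ⋂ n, U n := by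
          rw [hUi]
          simpa using hzx
        obtain ⟨n, hn⟩ := by
          simpa only [mem_iInter, not_forall] using this
        exact Or.inr (mem_iUnion.mpr ⟨n, hz, hn⟩)
    exact ((countable_singleton x₀).union (countable_iUnion key)).mono hsub2

end Core

section Scheme
variable {X P K : Type u} [TopologicalSpace X] [TopologicalSpace P] [TopologicalSpace K]
  [CompactSpace K] [T2Space K] [LindelofSpace P]
  {e : P → K} {f : P → X}

structure StepProp (f : P → X) (e : P → K) (Gn F : Set K)
    (c : Set K × Set K × (X → ℝ)) : Prop where
  closed0 : IsClosed c.1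
  closed1 : IsClosed c.2.1
  sub0 : c.1 ⊆ F
  sub1 : c.2.1 ⊆ F
  subG0 : c.1 ⊆ Gn
  subG1 : c.2.1 ⊆ Gn
  unc0 : ¬ (f '' (e ⁻¹' c.1)).Countable
  unc1 : ¬ (f '' (e ⁻¹' c.2.1)).Countable
  le0 : ∀ q ∈ e ⁻¹' c.1, c.2.2 (f q) ≤ 1/3
  ge1 : ∀ q ∈ e ⁻¹' c.2.1, 2/3 ≤ c.2.2 (f q)

lemma step_exists (hX : FunctionallyHausdorff X)
    (hψseq : ∀ x : X, ∃ U : ℕ → Set X, (∀ n, IsOpen (U n)) ∧ (∀ n, x ∈ U n) ∧ (⋂ n, U n) = {x})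
    (he : IsEmbedding e) (hf : Continuous f)
    {Gn : Set K} (hGn : IsOpen Gn) (hr : Set.range e ⊆ Gn)
    {F : Set K} (hF : IsClosed F) (hA : ¬ (f '' (e ⁻¹' F)).Countable) :
    ∃ c, StepProp f e Gn F c := by
  obtain ⟨F', h1, h2, h3, h4⟩ := shrink_lemma he hf hGn hr hF hA
  obtain ⟨g, hg, hg1, hg2⟩ := split_lemma hX hψseq he hf h1 h4
  obtain ⟨F₀, k1, k2, k3, k4⟩ := refine_lemma he hf h1 (isClosed_Iic.preimage hg) hg1
  obtain ⟨F₁, l1, l2, l3, l4⟩ := refine_lemma he hf h1 (isClosed_Ici.preimage hg) hg2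
  exact ⟨(F₀, F₁, g), k1, l1, k2.trans h2, l2.trans h2, k2.trans h3, l2.trans h3,
    k4, l4, k3, l3⟩

end Scheme

noncomputable def schemeFun {K : Type u} {Y : Type*}
    (step : Set K → ℕ → Set K × Set K × Y) : List Bool → Set K
  | [] => Set.univ
  | b :: s => if b then (step (schemeFun step s) s.length).2.1
              else (step (schemeFun step s) s.length).1

def branchList (σ : ℕ → Bool) : ℕ → List Bool
  | 0 => []
  | n + 1 => σ n :: branchList σ n

lemma branchList_length (σ : ℕ → Bool) (n : ℕ) : (branchList σ n).length = n := by
  induction n with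
  | zero => rfl
  | succ n ih => simp [branchList, ih]

lemma branchList_congr {σ τ : ℕ → Bool} {n : ℕ} (h : ∀ k < n, σ k = τ k) :
    branchList σ n = branchList τ n := by
  induction n with
  | zero => rfl
  | succ n ih =>
    simp only [branchList]
    rw [h n (Nat.lt_succ_self n), ih fun k hk => h k (hk.trans (Nat.lt_succ_self n))]

theorem stmt7 {X : Type u} [TopologicalSpace X]
    (hX : FunctionallyHausdorff X) (hKA : IsKAnalytic X) :
    Countable X ↔
      (pseudocharacter X ≤ ℵ₀ ∧ ∀ K : Set X, IsCompact K → K.Countable) := by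
  classical
  constructor
  · intro hC
    refine ⟨?_, fun K _ => K.to_countable⟩
    apply csInf_le'
    refine ⟨le_refl ℵ₀, fun x => ?_⟩
    set W : X → Set X := fun y =>
      if h : y = x then Set.univ else (FH_sep hX h).choose with hW
    have hWx : ∀ y, IsOpen (W y) ∧ x ∈ W y := by
      intro y
      by_cases h : y = x
      · simp [hW, h]
      · simp only [hW, dif_neg h]
        exact ⟨(FH_sep hX h).choose_spec.1, (FH_sep hX h).choose_spec.2.1⟩
    have hWy : ∀ y, y ≠ x → y ∉ W y := by
      intro y h
      simp only [hW, dif_neg h]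
      exact (FH_sep hX h).choose_spec.2.2
    refine ⟨Set.range W, ?_, ?_, ?_⟩
    · exact Cardinal.mk_range_le.trans Cardinal.mk_le_aleph0
    · rintro U ⟨y, rfl⟩
      exact hWx y
    · rw [FH_inter hX x]
      apply Subset.antisymm
      · intro z hz
        by_contra hzx
        exact hWy z hzx (hz (W z) (mem_range_self z))
      · rintro z rfl _ ⟨y, rfl⟩
        exact (hWx y).2
  · rintro ⟨hψ, hcompact⟩
    by_contra hXc
    obtain ⟨P, _tp, f, hLin, hCech, hf, hfs⟩ := hKA
    obtain ⟨K, _tK, e, hKcomp, hKt2, he, _hd, hGδ⟩ := hCech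
    obtain ⟨T, hTo, hTc, hTeq⟩ := hGδ
    obtain ⟨G, hG⟩ := (hTc.insert Set.univ).exists_eq_range (insert_nonempty _ _)
    have hGo : ∀ n, IsOpen (G n) := by
      intro n
      have : G n ∈ insert Set.univ T := hG ▸ mem_range_self n
      rcases this with h | h
      · simp [h]
      · exact hTo _ h
    have hGr : Set.range e = ⋂ n, G n := by
      rw [← sInter_range, ← hG, sInter_insert, hTeq, univ_inter]
    have hrsub : ∀ n, Set.range e ⊆ G n := by
      intro n
      rw [hGr]
      exact iInter_subset G n
    have hψseq := psi_seq hX hψ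
    have hstep' : ∀ (F : Set K) (n : ℕ), ∃ c : Set K × Set K × (X → ℝ),
        (IsClosed F ∧ ¬ (f '' (e ⁻¹' F)).Countable) → StepProp f e (G n) F c := by
      intro F n
      by_cases h : IsClosed F ∧ ¬ (f '' (e ⁻¹' F)).Countable
      · obtain ⟨c, hc⟩ := step_exists hX hψseq he hf (hGo n) (hrsub n) h.1 h.2
        exact ⟨c, fun _ => hc⟩
      · exact ⟨(∅, ∅, fun _ => 0), fun hh => absurd hh h⟩
    choose step hstep using hstep'
    have hroot : ¬ (f '' (e ⁻¹' (Set.univ : Set K))).Countable := by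
      rw [preimage_univ, image_univ, hfs.range_eq]
      intro h
      exact hXc (Set.countable_univ_iff.mp h)
    have hcons_false : ∀ s : List Bool,
        schemeFun step (false :: s) = (step (schemeFun step s) s.length).1 := by
      intro s; simp [schemeFun]
    have hcons_true : ∀ s : List Bool,
        schemeFun step (true :: s) = (step (schemeFun step s) s.length).2.1 := by
      intro s; simp [schemeFun]
    have hnil : schemeFun step ([] : List Bool) = Set.univ := rfl
    have hinv : ∀ s : List Bool,
        IsClosed (schemeFun step s) ∧ ¬ (f '' (e ⁻¹' (schemeFun step s))).Countable := by
      intro s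
      induction s with
      | nil => exact ⟨by rw [hnil]; exact isClosed_univ, by rw [hnil]; exact hroot⟩
      | cons b s ih =>
        have hs := hstep (schemeFun step s) s.length ih
        cases b
        · rw [hcons_false]
          exact ⟨hs.closed0, hs.unc0⟩
        · rw [hcons_true]
          exact ⟨hs.closed1, hs.unc1⟩
    have hspec : ∀ s : List Bool,
        StepProp f e (G s.length) (schemeFun step s) (step (schemeFun step s) s.length) :=
      fun s => hstep _ _ (hinv s)
    have hchild_sub : ∀ (b : Bool) (s : List Bool),
        schemeFun step (b :: s) ⊆ schemeFun step s := by
      intro b s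
      cases b
      · rw [hcons_false]; exact (hspec s).sub0
      · rw [hcons_true]; exact (hspec s).sub1
    have hchild_G : ∀ (b : Bool) (s : List Bool),
        schemeFun step (b :: s) ⊆ G s.length := by
      intro b s
      cases b
      · rw [hcons_false]; exact (hspec s).subG0
      · rw [hcons_true]; exact (hspec s).subG1
    have hBne : ∀ s : List Bool, (schemeFun step s).Nonempty := by
      intro s
      have h2 := (hinv s).2
      rcases (f '' (e ⁻¹' (schemeFun step s))).eq_empty_or_nonempty with h | h
      · exact absurd (h ▸ countable_empty) h2
      · obtain ⟨x, q, hq, rfl⟩ := h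
        exact ⟨e q, hq⟩
    have hp : ∀ σ : ℕ → Bool, ∃ p : K, ∀ n, p ∈ schemeFun step (branchList σ n) := by
      intro σ
      have := IsCompact.nonempty_iInter_of_sequence_nonempty_isCompact_isClosed
        (fun n => schemeFun step (branchList σ n))
        (fun n => hchild_sub (σ n) (branchList σ n))
        (fun n => hBne _)
        (by show IsCompact (schemeFun step (branchList σ 0))
            rw [show branchList σ 0 = ([] : List Bool) from rfl, hnil]
            exact isCompact_univ)
        (fun n => (hinv _).1)
      obtain ⟨p, hp⟩ := this
      exact ⟨p, fun n => mem_iInter.mp hp n⟩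
    choose p hp using hp
    have hprange : ∀ σ, p σ ∈ Set.range e := by
      intro σ
      rw [hGr]
      refine mem_iInter.mpr fun n => ?_
      have h1 := hp σ (n + 1)
      have h2 : schemeFun step (branchList σ (n + 1)) ⊆ G n := by
        have := hchild_G (σ n) (branchList σ n)
        rwa [branchList_length] at this
      exact h2 h1
    choose q hq using hprange
    have hqmem : ∀ σ n, q σ ∈ e ⁻¹' (schemeFun step (branchList σ n)) := by
      intro σ n
      rw [mem_preimage, hq]
      exact hp σ n
    have hinj : Function.Injective (fun σ : ℕ → Bool => f (q σ)) := by
      intro σ τ hfq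
      simp only at hfq
      by_contra hne
      have hex : ∃ n, σ n ≠ τ n := by
        by_contra h
        push_neg at h
        exact hne (funext h)
      set n := Nat.find hex with hn
      have hlt : ∀ k < n, σ k = τ k := fun k hk => not_not.mp (Nat.find_min hex hk)
      have hnσ : σ n ≠ τ n := Nat.find_spec hex
      have hBeq : branchList σ n = branchList τ n := branchList_congr hlt
      have hσ1 : q σ ∈ e ⁻¹' (schemeFun step (σ n :: branchList σ n)) := hqmem σ (n + 1)
      have hτ1 : q τ ∈ e ⁻¹' (schemeFun step (τ n :: branchList σ n)) := by
        have := hqmem τ (n + 1)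
        rwa [show branchList τ (n + 1) = τ n :: branchList τ n from rfl, ← hBeq] at this
      have hlen : (branchList σ n).length = n := branchList_length σ n
      rcases Bool.eq_false_or_eq_true (σ n) with h1 | h1 <;>
        rcases Bool.eq_false_or_eq_true (τ n) with h2 | h2
      · exact hnσ (h1.trans h2.symm)
      · rw [h1, hcons_true] at hσ1
        rw [h2, hcons_false] at hτ1
        have b1 := (hspec (branchList σ n)).ge1 (q σ) hσ1
        have b2 := (hspec (branchList σ n)).le0 (q τ) hτ1
        rw [hfq] at b1
        linarith
      · rw [h1, hcons_false] at hσ1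
        rw [h2, hcons_true] at hτ1
        have b1 := (hspec (branchList σ n)).le0 (q σ) hσ1
        have b2 := (hspec (branchList σ n)).ge1 (q τ) hτ1
        rw [hfq] at b1
        linarith
      · exact hnσ (h1.trans h2.symm)
    set C := ⋂ n, ⋃ s ∈ {l : List Bool | l.length = n}, schemeFun step s with hC
    have hCclosed : IsClosed C :=
      isClosed_iInter fun n =>
        (List.finite_length_eq Bool n).isClosed_biUnion fun s _ => (hinv s).1
    have hCcomp : IsCompact C := hCclosed.isCompact
    have hCrange : C ⊆ Set.range e := by
      intro z hz
      rw [hGr]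
      refine mem_iInter.mpr fun n => ?_
      have h1 := mem_iInter.mp hz (n + 1)
      obtain ⟨s, hs, hzs⟩ := mem_iUnion₂.mp h1
      match s, hs with
      | b :: t, hs =>
        have ht : t.length = n := by simpa using hs
        exact ht ▸ (hchild_G b t) hzs
    have hDcomp : IsCompact (f '' (e ⁻¹' C)) :=
      (he.isInducing.isCompact_preimage' hCcomp hCrange).image hf
    have hDcnt := hcompact _ hDcomp
    have hqC : ∀ σ, q σ ∈ e ⁻¹' C := by
      intro σ
      rw [mem_preimage, hq]
      exact mem_iInter.mpr fun n =>
        mem_iUnion₂.mpr ⟨branchList σ n, branchList_length σ n, hp σ n⟩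
    have hrng : Set.range (fun σ : ℕ → Bool => f (q σ)) ⊆ f '' (e ⁻¹' C) := by
      rintro _ ⟨σ, rfl⟩
      exact mem_image_of_mem f (hqC σ)
    have hrngc : (Set.range (fun σ : ℕ → Bool => f (q σ))).Countable := hDcnt.mono hrng
    have : Countable (ℕ → Bool) := by
      have h1 : Countable ↥(Set.range fun σ : ℕ → Bool => f (q σ)) := hrngc
      exact Countable.of_equiv _ (Equiv.ofInjective _ hinj).symm
    exact not_countable_nat_bool this
end

section
/- Assume ω₁ < 𝔟. Then every K-analytic topological space X in which every compact subset is at most countable is itself at most countable. -/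
open Cardinal Set Topology

universe u

/-! A Lindelöf Čech-complete space is a Lindelöf Gδ-set `⋂ n, G n` of a compact space. Covering
it, for each `n`, by countably many open sets `W n m` with closures inside `G n`, the closed sets
`⋂ n, ⋃ m ≤ z n, closure (W n m)` are compact, lie in the space, and contain every point `p` with
`σ p ≤ z`, where `σ p n` indexes a `W n m` containing `p`. Pushing forward, the K-analytic space `X`
is covered in this way by compact, hence countable, sets `C z`. The index functions of `ℵ₁` points
of `X` are `≤*`-bounded by a single `y` because `ℵ₁ < 𝔟`, so all those points lie in the countable
union of the sets `C (y ⊔ k)`, `k ∈ ℕ`; hence `X` has no `ℵ₁` distinct points. -/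

def HasCompactResolution (X : Type u) [TopologicalSpace X] : Prop :=
  ∃ C : (ℕ → ℕ) → Set X, (∀ z, IsCompact (C z)) ∧ ∀ x, ∃ σ : ℕ → ℕ, ∀ z, σ ≤ z → x ∈ C z

theorem IsLindelof.exists_nat_cover_closure_subset {K : Type u} [TopologicalSpace K]
    [RegularSpace K] {s U : Set K} (hs : IsLindelof s) (hU : IsOpen U) (hsU : s ⊆ U) :
    ∃ W : ℕ → Set K, (∀ m, IsOpen (W m)) ∧ (∀ m, closure (W m) ⊆ U) ∧ s ⊆ ⋃ m, W m := by
  let ι := {V : Set K // IsOpen V ∧ closure V ⊆ U}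
  have : Nonempty ι := ⟨⟨∅, isOpen_empty, by simp⟩⟩
  have hcover : s ⊆ ⋃ V : ι, V.1 := by
    intro x hx
    obtain ⟨t, ht, htc, htU⟩ := exists_mem_nhds_isClosed_subset (hU.mem_nhds (hsU hx))
    exact mem_iUnion.2 ⟨⟨interior t, isOpen_interior,
      (closure_minimal interior_subset htc).trans htU⟩, mem_interior_iff_mem_nhds.2 ht⟩
  obtain ⟨g, hg⟩ := hs.indexed_countable_subcover _ (fun V : ι => V.2.1) hcover
  exact ⟨fun m => (g m).1, fun m => (g m).2.1, fun m => (g m).2.2, hg⟩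

theorem IsGδ.exists_compact_resolution {K : Type u} [TopologicalSpace K] [CompactSpace K]
    [RegularSpace K] {S : Set K} (hS : IsGδ S) (hSl : IsLindelof S) :
    ∃ C : (ℕ → ℕ) → Set K, (∀ z, IsCompact (C z) ∧ C z ⊆ S) ∧
      ∀ x ∈ S, ∃ σ : ℕ → ℕ, ∀ z, σ ≤ z → x ∈ C z := by
  obtain ⟨G, hGo, rfl⟩ := hS.eq_iInter_nat
  choose W _ hWG hSW using fun n =>
    hSl.exists_nat_cover_closure_subset (hGo n) (iInter_subset _ n)
  refine ⟨fun z => ⋂ n, ⋃ m ∈ Finset.range (z n + 1), closure (W n m), fun z => ⟨?_, ?_⟩, ?_⟩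
  · refine (isClosed_iInter fun n => ?_).isCompact
    exact (Finset.range _).finite_toSet.isClosed_biUnion fun m _ => isClosed_closure
  · refine iInter_mono fun n => ?_
    exact iUnion₂_subset fun m _ => hWG n m
  · intro x hx
    choose σ hσ using fun n => mem_iUnion.1 (hSW n hx)
    refine ⟨σ, fun z hz => mem_iInter.2 fun n => mem_iUnion₂.2 ?_⟩
    exact ⟨σ n, Finset.mem_range_succ_iff.2 (hz n), subset_closure (hσ n)⟩

theorem IsCechComplete.hasCompactResolution {P : Type u} [TopologicalSpace P] [LindelofSpace P]
    (hP : IsCechComplete P) : HasCompactResolution P := by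
  obtain ⟨K, _, e, _, _, he, -, hGδ⟩ := hP
  obtain ⟨C, hC, hσ⟩ := hGδ.exists_compact_resolution (isLindelof_range he.continuous)
  exact ⟨fun z => e ⁻¹' C z, fun z => he.isInducing.isCompact_preimage' (hC z).1 (hC z).2,
    fun p => hσ (e p) (mem_range_self p)⟩

theorem HasCompactResolution.of_surjective {P X : Type u} [TopologicalSpace P]
    [TopologicalSpace X] (hP : HasCompactResolution P) {f : P → X} (hf : Continuous f)
    (hfs : Function.Surjective f) : HasCompactResolution X := by
  obtain ⟨C, hC, hσ⟩ := hP
  refine ⟨fun z => f '' C z, fun z => (hC z).image hf, fun x => ?_⟩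
  obtain ⟨p, rfl⟩ := hfs x
  obtain ⟨σ, hσ⟩ := hσ p
  exact ⟨σ, fun z hz => mem_image_of_mem f (hσ z hz)⟩

theorem IsKAnalytic.hasCompactResolution {X : Type u} [TopologicalSpace X]
    (hX : IsKAnalytic X) : HasCompactResolution X := by
  obtain ⟨P, _, f, _, hP, hf, hfs⟩ := hX
  exact hP.hasCompactResolution.of_surjective hf hfs

theorem exists_le_sup_const_of_eventuallyLE {x y : ℕ → ℕ} (h : x ≤ᶠ[Filter.cofinite] y) :
    ∃ k : ℕ, x ≤ y ⊔ fun _ => k := by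
  obtain ⟨s, hs⟩ := (Filter.eventually_cofinite.1 h).exists_finset_coe
  refine ⟨s.sup x, fun n => ?_⟩
  by_cases hn : n ∈ s
  · exact le_sup_of_le_right (Finset.le_sup hn)
  · exact le_sup_of_le_left (not_not.1 fun hxy => hn (by rwa [← Finset.mem_coe, hs]))

theorem exists_eventuallyLE_of_mk_lt_boundingNumber {B : Set (ℕ → ℕ)}
    (hB : #B < boundingNumber) : ∃ y, ∀ x ∈ B, x ≤ᶠ[Filter.cofinite] y := by
  by_contra! hunbounded
  refine hB.not_ge (csInf_le' ⟨B, rfl, fun y => ?_⟩)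
  obtain ⟨x, hx, hxy⟩ := hunbounded y
  exact ⟨x, hx, fun hfin => hxy (Filter.eventually_cofinite.2 hfin)⟩

theorem HasCompactResolution.countable_range_of_mk_lt_boundingNumber {X : Type u}
    [TopologicalSpace X] (hX : HasCompactResolution X)
    (hc : ∀ K : Set X, IsCompact K → K.Countable) {ι : Type} (j : ι → X)
    (hι : #ι < boundingNumber) : (range j).Countable := by
  obtain ⟨C, hC, hσ⟩ := hX
  choose σ hσ using hσ
  obtain ⟨y, hy⟩ := exists_eventuallyLE_of_mk_lt_boundingNumber
    (mk_range_le (f := σ ∘ j) |>.trans_lt hι)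
  refine (countable_iUnion fun k : ℕ => hc _ (hC (y ⊔ fun _ => k))).mono ?_
  rintro _ ⟨i, rfl⟩
  obtain ⟨k, hk⟩ := exists_le_sup_const_of_eventuallyLE (hy _ ⟨i, rfl⟩)
  exact mem_iUnion.2 ⟨k, hσ _ _ hk⟩

theorem exists_uncountable_embedding_mk_le_aleph_one (X : Type u) [Uncountable X] :
    ∃ (ι : Type) (_ : ι ↪ X), Uncountable ι ∧ #ι ≤ ℵ₁ := by
  refine ⟨(ℵ₁ : Cardinal.{0}).out, ?_, ?_, (mk_out _).le⟩
  · refine Classical.choice (Cardinal.lift_mk_le'.1 ?_)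
    simp
  · exact aleph0_lt_mk_iff.1 ((mk_out _).symm ▸ aleph0_lt_aleph_one)

theorem stmt8 (hb : Cardinal.aleph 1 < boundingNumber)
    {X : Type u} [TopologicalSpace X] (hKA : IsKAnalytic X)
    (hc : ∀ K : Set X, IsCompact K → K.Countable) :
    Countable X := by
  by_contra hX
  have : Uncountable X := not_countable_iff.1 hX
  obtain ⟨ι, j, hι, hιcard⟩ := exists_uncountable_embedding_mk_le_aleph_one X
  have hrange := hKA.hasCompactResolution.countable_range_of_mk_lt_boundingNumber hc j
    (hιcard.trans_lt hb)
  have : Countable (range j) := hrange.to_subtype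
  exact not_countable_iff.2 hι (rangeFactorization_injective.2 j.injective).countable
end

section
/- Assume ω₁ < 𝔟. Let X be a set and (A_s)_{s ∈ ω^ω} a family of at most countable subsets of X such that X = ⋃_{s ∈ ω^ω} A_s and A_s ⊆ A_t whenever s(n) ≤ t(n) for all n ∈ ω. Then X is at most countable. -/
open Cardinal Set Topology

universe u

/-! If `X` were uncountable, pick `ℵ₁` of its points and for each point `x` an index `s x`
with `x ∈ A (s x)`. As `ℵ₁ < 𝔟`, the indices have a common `≤*`-bound `y`, and `s x ≤ max (s x) y`
pointwise, where `max (s x) y` agrees with `y` off a finite set. By monotonicity all chosen points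
lie in the union of the `A f` over the countably many `f` that are cofinitely equal to `y`. -/

open Filter

theorem exists_forall_eventuallyLE_of_mk_lt_boundingNumber {B : Set (ℕ → ℕ)}
    (hB : #B < boundingNumber) : ∃ y : ℕ → ℕ, ∀ x ∈ B, x ≤ᶠ[cofinite] y := by
  by_contra! h
  refine hB.not_ge (csInf_le' ⟨B, rfl, fun y => ?_⟩)
  obtain ⟨x, hxB, hxy⟩ := h y
  exact ⟨x, hxB, by simpa [EventuallyLE, eventually_cofinite] using hxy⟩

theorem countable_setOf_eventuallyEq_cofinite {α β : Type*} [Countable α] [Countable β]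
    (y : α → β) : {f : α → β | f =ᶠ[cofinite] y}.Countable := by
  have hsub : {f : α → β | f =ᶠ[cofinite] y} ⊆
      ⋃ F : Finset α, {f | ∀ n ∉ F, f n = y n} := by
    intro f hf
    exact mem_iUnion.2 ⟨(eventually_cofinite.1 hf).toFinset, fun n hn => by simpa using hn⟩
  refine (countable_iUnion fun F => ?_).mono hsub
  have hinj : InjOn (fun f : α → β => fun n : F => f n) {f | ∀ n ∉ F, f n = y n} := by
    intro f hf g hg hfg
    funext n
    by_cases hn : n ∈ F
    · exact congrFun hfg ⟨n, hn⟩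
    · rw [hf n hn, hg n hn]
  exact MapsTo.countable_of_injOn (mapsTo_univ _ _) hinj countable_univ

theorem countable_of_mk_lt_lift_boundingNumber {X : Type u} (A : (ℕ → ℕ) → Set X)
    (hcount : ∀ s, (A s).Countable) (hcover : ⋃ s : ℕ → ℕ, A s = Set.univ)
    (hmono : ∀ s t : ℕ → ℕ, (∀ n, s n ≤ t n) → A s ⊆ A t) {S : Set X}
    (hS : #S < lift.{u} boundingNumber) : S.Countable := by
  have hmem : ∀ x : S, ∃ s, (x : X) ∈ A s := fun x => mem_iUnion.1 (hcover ▸ mem_univ _)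
  choose s hs using hmem
  obtain ⟨y, hy⟩ := exists_forall_eventuallyLE_of_mk_lt_boundingNumber
    (lift_lt.1 (mk_range_le_lift.trans_lt (by rwa [lift_uzero])) : #(range s) < boundingNumber)
  refine ((countable_setOf_eventuallyEq_cofinite y).biUnion fun f _ => hcount f).mono ?_
  intro x hx
  have hsy : s ⟨x, hx⟩ ≤ᶠ[cofinite] y := hy _ (mem_range_self _)
  exact mem_biUnion (x := fun n => max (s ⟨x, hx⟩ n) (y n))
    (hsy.mono fun n hn => max_eq_right hn)
    (hmono _ _ (fun n => le_max_left _ _) (hs _))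

theorem stmt13 (hb : Cardinal.aleph 1 < boundingNumber)
    {X : Type u} (A : (ℕ → ℕ) → Set X)
    (hcount : ∀ s, (A s).Countable)
    (hcover : ⋃ s : ℕ → ℕ, A s = Set.univ)
    (hmono : ∀ s t : ℕ → ℕ, (∀ n, s n ≤ t n) → A s ⊆ A t) :
    Countable X := by
  by_contra hX
  have : Uncountable X := not_countable_iff.1 hX
  obtain ⟨S, hS⟩ := le_mk_iff_exists_set.1 (aleph_one_le_iff.2 (aleph0_lt_mk (α := X)))
  have hSc : S.Countable := countable_of_mk_lt_lift_boundingNumber A hcount hcover hmono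
    (by simpa [hS] using hb)
  exact (le_aleph0_iff_set_countable.2 hSc).not_gt (hS ▸ aleph0_lt_aleph_one)
end

section
/- Every K-analytic topological space X admits a cover X = ⋃_{s ∈ ω^ω} C_s by compact subsets C_s ⊆ X such that C_s ⊆ C_t whenever s(n) ≤ t(n) for all n ∈ ω. -/
open Cardinal Set Topology

universe u

theorem stmt14 {X : Type u} [TopologicalSpace X] (hKA : IsKAnalytic X) :
    ∃ C : (ℕ → ℕ) → Set X, (∀ s, IsCompact (C s)) ∧
      (⋃ s : ℕ → ℕ, C s = Set.univ) ∧
      ∀ s t : ℕ → ℕ, (∀ n, s n ≤ t n) → C s ⊆ C t := by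
  obtain ⟨P, _, f, hLin, ⟨K, _, e, hKcomp, hKT2, he, -, hGδ⟩, hfc, hfs⟩ := hKA
  rcases isEmpty_or_nonempty P with hP | hP
  · refine ⟨fun _ => ∅, fun _ => isCompact_empty, ?_, fun _ _ _ => subset_rfl⟩
    have : IsEmpty X := ⟨fun x => (hfs x).elim fun p _ => hP.false p⟩
    simp [Set.eq_empty_of_isEmpty (Set.univ : Set X)]
  -- range e = ⋂ n, U n with U n open
  obtain ⟨U, hUo, hUeq⟩ := hGδ.eq_iInter_nat
  -- For each n, cover range e by countably many opens with closure inside U n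
  have key : ∀ n : ℕ, ∃ V : ℕ → Set K, (∀ m, IsOpen (V m)) ∧
      (∀ m, closure (V m) ⊆ U n) ∧ Set.range e ⊆ ⋃ m, V m := by
    intro n
    have hre : Set.range e ⊆ U n := by rw [hUeq]; exact Set.iInter_subset U n
    -- for each p, an open nbhd of e p with closure in U n
    have hpt : ∀ p : P, ∃ V : Set K, IsOpen V ∧ e p ∈ V ∧ closure V ⊆ U n := by
      intro p
      have : U n ∈ 𝓝ˢ ({e p} : Set K) := by
        rw [nhdsSet_singleton]
        exact (hUo n).mem_nhds (hre ⟨p, rfl⟩)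
      obtain ⟨V, hVo, hV1, hV2⟩ := isCompact_singleton.exists_isOpen_closure_subset this
      exact ⟨V, hVo, hV1 rfl, hV2⟩
    choose V hVo hVm hVc using hpt
    -- range e is Lindelöf
    have hLe : IsLindelof (Set.range e) := by
      have := isLindelof_univ (X := P)
      simpa [Set.image_univ] using this.image he.continuous
    obtain ⟨r, hrc, hrsub⟩ := hLe.elim_countable_subcover V hVo
      (fun k hk => by obtain ⟨p, rfl⟩ := hk; exact Set.mem_iUnion.2 ⟨p, hVm p⟩)
    rcases r.eq_empty_or_nonempty with rfl | hne
    · simp only [Set.mem_empty_iff_false, Set.iUnion_of_empty, Set.iUnion_empty,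
        Set.subset_empty_iff] at hrsub
      exact absurd hrsub (Set.Nonempty.ne_empty (Set.range_nonempty e))
    obtain ⟨g, hg⟩ := hrc.exists_surjective hne
    refine ⟨fun m => V (g m), fun m => hVo _, fun m => hVc _, ?_⟩
    intro k hk
    obtain ⟨p, hpr, hpV⟩ := Set.mem_iUnion₂.1 (hrsub hk)
    obtain ⟨m, hm⟩ := hg ⟨p, hpr⟩
    exact Set.mem_iUnion.2 ⟨m, by rw [hm]; exact hpV⟩
  choose V hVo hVc hVcov using key
  -- the compact sets in K
  set Q : (ℕ → ℕ) → Set K := fun s => ⋂ n, closure (⋃ m ∈ Finset.range (s n + 1), V n m)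
    with hQ
  have hQclosed : ∀ s, IsClosed (Q s) := fun s =>
    isClosed_iInter fun n => isClosed_closure
  have hQcomp : ∀ s, IsCompact (Q s) := fun s => (hQclosed s).isCompact
  have hQsub : ∀ s, Q s ⊆ Set.range e := by
    intro s
    rw [hUeq]
    refine Set.iInter_mono fun n => ?_
    rw [Finset.closure_biUnion]
    exact Set.iUnion₂_subset fun m _ => hVc n m
  have hQmono : ∀ s t : ℕ → ℕ, (∀ n, s n ≤ t n) → Q s ⊆ Q t := by
    intro s t hst
    refine Set.iInter_mono fun n => closure_mono ?_
    refine Set.iUnion₂_subset fun m hm => fun k hk => ?_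
    have h1 := hst n
    rw [Finset.mem_range] at hm
    exact Set.mem_biUnion (Finset.mem_range.2 (by omega)) hk
  refine ⟨fun s => f '' (e ⁻¹' Q s), fun s => ?_, ?_, fun s t hst => ?_⟩
  · exact (he.isInducing.isCompact_preimage' (hQcomp s) (hQsub s)).image hfc
  · apply Set.eq_univ_of_forall
    intro x
    obtain ⟨p, rfl⟩ := hfs x
    have : ∀ n, ∃ m, e p ∈ V n m := fun n =>
      Set.mem_iUnion.1 (hVcov n ⟨p, rfl⟩)
    choose s hs using this
    refine Set.mem_iUnion.2 ⟨s, ⟨p, ?_, rfl⟩⟩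
    refine Set.mem_preimage.2 (Set.mem_iInter.2 fun n => subset_closure ?_)
    exact Set.mem_biUnion (Finset.self_mem_range_succ (s n)) (hs n)
  · exact Set.image_mono (Set.preimage_mono (hQmono s t hst))
end

section
/- Let Y ⊆ ω^ω be such that for every y ∈ ω^ω the set {x ∈ Y : x(n) ≤ y(n) for all n} is at most countable, let ∞ be a point not in Y, and let X = {∞} ∪ Y carry the topology generated by the sets {y} for y ∈ Y together with the sets X \ D for all subsets D ⊆ Y that are closed and discrete in ω^ω. Then every compact subset of X is at most countable. -/
/-!
Let `A ⊆ Y` be the trace on `Y` of a compact `K ⊆ X`. Since `{y}` is open for `y ∈ Y` and `X \ D`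
is open for every closed discrete `D ⊆ Y`, each such `D` is closed and discrete in `X` too, so
`K` meets it in a finite set: every closed discrete subset of `A` is finite. A set meeting the
fibres of one coordinate `x ↦ x n` at most once is closed and discrete in `ω^ω`, so each
coordinate takes finitely many values on `A`. Hence `A` is bounded by some `y ∈ ω^ω`, and is
countable by the hypothesis on `Y`.
-/

open Cardinal Set Topology

universe u

open Filter Function

theorem isClosed_and_isDiscrete_of_injOn {X Z : Type*} [TopologicalSpace X] [T1Space X]
    [TopologicalSpace Z] [DiscreteTopology Z] {f : X → Z} (hf : Continuous f) {D : Set X}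
    (hD : InjOn f D) : IsClosed D ∧ IsDiscrete D := by
  refine isClosed_and_discrete_iff.2 fun x ↦ disjoint_principal_right.2 ?_
  set F := f ⁻¹' {f x}
  have hF : F ∈ 𝓝 x := hf.continuousAt.preimage_mem_nhds (isOpen_discrete _ |>.mem_nhds rfl)
  have hsub : (D ∩ F).Subsingleton := fun a ha b hb ↦ hD ha.1 hb.1 (ha.2.trans hb.2.symm)
  have hrest : ((D ∩ F) \ {x})ᶜ ∈ 𝓝 x :=
    (hsub.finite.sdiff.isClosed.isOpen_compl).mem_nhds fun h ↦ h.2 rfl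
  filter_upwards [mem_nhdsWithin_of_mem_nhds (inter_mem hF hrest), self_mem_nhdsWithin]
    with y hy hyx hyD
  exact hy.2 ⟨⟨hyD, hy.1⟩, hyx⟩

theorem IsCompact.finite_inter_of_isOpen_singleton {X : Type*} [TopologicalSpace X]
    {K D : Set X} (hK : IsCompact K) (hD : IsClosed D) (hiso : ∀ x ∈ D, IsOpen {x}) :
    (K ∩ D).Finite :=
  (hK.inter_right hD).finite <| isDiscrete_iff_forall_mem_exists_isOpen.2 fun x hx ↦
    ⟨{x}, hiso x hx.2, by simpa using hx⟩

theorem finite_image_eval_of_forall_isClosed_isDiscrete_finite {ι α : Type*}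
    [TopologicalSpace α] [DiscreteTopology α] {A : Set (ι → α)}
    (hA : ∀ D ⊆ A, IsClosed D → IsDiscrete D → D.Finite) (i : ι) : (eval i '' A).Finite := by
  obtain ⟨D, hDA, hbij⟩ := exists_subset_bijOn A (eval i)
  obtain ⟨hDc, hDd⟩ := isClosed_and_isDiscrete_of_injOn (continuous_apply i) hbij.injOn
  exact hbij.image_eq ▸ (hA D hDA hDc hDd).image _

theorem Set.Countable.of_preimage_some {α : Type*} {K : Set (Option α)}
    (hK : (some ⁻¹' K).Countable) : K.Countable :=
  ((hK.image some).insert none).mono fun x hx ↦ by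
    cases x with
    | none => exact mem_insert _ _
    | some a => exact mem_insert_of_mem _ (mem_image_of_mem _ hx)

/-- The space `X = {∞} ∪ Y`, with `none` as the point `∞`. -/
abbrev closedDiscreteExtensionTopology (Y : Set (ℕ → ℕ)) : TopologicalSpace (Option Y) :=
  TopologicalSpace.generateFrom
    ({S : Set (Option ↥Y) | ∃ y : ↥Y, S = {Option.some y}} ∪
     {S : Set (Option ↥Y) | ∃ D : Set (ℕ → ℕ), D ⊆ Y ∧ IsClosed D ∧
        DiscreteTopology ↥D ∧
        S = {x : Option ↥Y | ∀ d : ↥Y, x = Option.some d → (d : ℕ → ℕ) ∉ D}})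

namespace closedDiscreteExtensionTopology

attribute [local instance] closedDiscreteExtensionTopology

variable {Y : Set (ℕ → ℕ)}

theorem isOpen_singleton_some (y : Y) : IsOpen {some y} :=
  TopologicalSpace.isOpen_generateFrom_of_mem (Or.inl ⟨y, rfl⟩)

theorem isClosed_image_some {D : Set (ℕ → ℕ)} (hDY : D ⊆ Y) (hDc : IsClosed D)
    (hDd : IsDiscrete D) : IsClosed (some '' (Subtype.val ⁻¹' D) : Set (Option Y)) := by
  refine isOpen_compl_iff.1 (TopologicalSpace.isOpen_generateFrom_of_mem
    (Or.inr ⟨D, hDY, hDc, hDd.to_subtype, ?_⟩))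
  ext (_ | y)
  · simp
  · simpa [Subtype.ext_iff] using ⟨fun h _ _ hya ↦ hya ▸ h, fun h ↦ h _ y.2 rfl⟩

theorem finite_of_subset_of_isCompact {K : Set (Option Y)} (hK : IsCompact K)
    {D : Set (ℕ → ℕ)} (hDK : D ⊆ Subtype.val '' (some ⁻¹' K)) (hDc : IsClosed D)
    (hDd : IsDiscrete D) : D.Finite := by
  have hDY : D ⊆ Y := fun x hx ↦ by
    obtain ⟨y, -, rfl⟩ := hDK hx
    exact y.2
  have hfin := hK.finite_inter_of_isOpen_singleton (isClosed_image_some hDY hDc hDd)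
    (by rintro _ ⟨y, -, rfl⟩; exact isOpen_singleton_some y)
  refine ((hfin.preimage (Option.some_injective _).injOn).image Subtype.val).subset ?_
  intro x hx
  obtain ⟨y, hyK, rfl⟩ := hDK hx
  exact ⟨y, ⟨hyK, y, hx, rfl⟩, rfl⟩

theorem countable_of_isCompact (hY : ∀ y : ℕ → ℕ, {x ∈ Y | ∀ n, x n ≤ y n}.Countable)
    {K : Set (Option Y)} (hK : IsCompact K) : K.Countable := by
  set A : Set (ℕ → ℕ) := Subtype.val '' (some ⁻¹' K)
  have hbdd : BddAbove A := bddAbove_pi.2 fun n ↦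
    (finite_image_eval_of_forall_isClosed_isDiscrete_finite
      (fun _ hDA ↦ finite_of_subset_of_isCompact hK hDA) n).bddAbove
  obtain ⟨y, hy⟩ := hbdd
  have hA : A.Countable := (hY y).mono fun x hx ↦
    mem_sep (by obtain ⟨z, -, rfl⟩ := hx; exact z.2) (hy hx)
  have hKA : some ⁻¹' K ⊆ Subtype.val ⁻¹' A := fun z hz ↦ mem_image_of_mem _ hz
  exact .of_preimage_some ((hA.preimage Subtype.val_injective).mono hKA)

end closedDiscreteExtensionTopology

theorem stmt16 (Y : Set (ℕ → ℕ))
    (hY : ∀ y : ℕ → ℕ, {x ∈ Y | ∀ n, x n ≤ y n}.Countable) :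
    ∀ K : Set (Option ↥Y),
      @IsCompact _ (TopologicalSpace.generateFrom
        ({S : Set (Option ↥Y) | ∃ y : ↥Y, S = {Option.some y}} ∪
         {S : Set (Option ↥Y) | ∃ D : Set (ℕ → ℕ), D ⊆ Y ∧ IsClosed D ∧
            DiscreteTopology ↥D ∧
            S = {x : Option ↥Y | ∀ d : ↥Y, x = Option.some d → (d : ℕ → ℕ) ∉ D}})) K →
      K.Countable :=
  fun _ ↦ closedDiscreteExtensionTopology.countable_of_isCompact hY
end

section
/- Let X be a scattered compact Hausdorff space. Then for every continuous map f : X → Y to a metrizable space Y, the image f(X) is at most countable. -/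
/-! Fix a nonempty `T ⊆ f '' X`. Among the closed sets `A ⊆ X` with `T ⊆ f '' A`, Zorn's lemma
(with Cantor's intersection theorem on the fibres) gives a minimal one `m`. An isolated point
`x ∈ m`, with `U ∩ m = {x}`, cannot be dropped, so some `t ∈ T` is missed by the compact set
`f '' (m \ U)`; every such point of `T` is `f x`, so the open set `(f '' (m \ U))ᶜ` isolates `t`
in `T`. Thus `f '' X` is scattered; it is also compact metrizable, hence second countable, and a
scattered closed set there contains no nonempty perfect set, so it is countable by
Cantor–Bendixson. -/

open Cardinal Set Topology

universe u

section

variable {X Z : Type*} [TopologicalSpace X] [TopologicalSpace Z]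

theorem mem_image_sInter_of_isChain [CompactSpace X] [T1Space Z] {g : X → Z}
    (hg : Continuous g) {c : Set (Set X)} (hc : IsChain (· ⊆ ·) c) (hcne : c.Nonempty)
    (hclosed : ∀ A ∈ c, IsClosed A) {z : Z} (hz : ∀ A ∈ c, z ∈ g '' A) :
    z ∈ g '' ⋂₀ c := by
  have : Nonempty c := hcne.to_subtype
  have hfiber : IsClosed (g ⁻¹' {z}) := isClosed_singleton.preimage hg
  obtain ⟨x, hx⟩ := IsCompact.nonempty_iInter_of_directed_nonempty_isCompact_isClosed
    (fun A : c => (A : Set X) ∩ g ⁻¹' {z})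
    (IsChain.directed (r := (· ⊇ ·)) (f := (· ∩ g ⁻¹' {z}))
      (hc.symm.mono_rel fun _ _ h => inter_subset_inter_left _ h))
    (fun A => hz A A.2) (fun A => ((hclosed A A.2).inter hfiber).isCompact)
    (fun A => (hclosed A A.2).inter hfiber)
  simp only [mem_iInter, mem_inter_iff, mem_preimage, mem_singleton_iff] at hx
  exact ⟨x, mem_sInter.2 fun A hA => (hx ⟨A, hA⟩).1, (hx (Classical.arbitrary c)).2⟩

theorem exists_minimal_isClosed_subset_image [CompactSpace X] [T1Space Z] {g : X → Z}
    (hg : Continuous g) {T : Set Z} (hT : T ⊆ range g) :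
    ∃ m, Minimal (fun A => IsClosed A ∧ T ⊆ g '' A) m := by
  obtain ⟨m, -, hm⟩ := zorn_superset_nonempty {A | IsClosed A ∧ T ⊆ g '' A}
    (fun c hcS hc hcne => ⟨⋂₀ c,
      ⟨isClosed_sInter fun A hA => (hcS hA).1, fun z hz => mem_image_sInter_of_isChain hg hc hcne
        (fun A hA => (hcS hA).1) fun A hA => (hcS hA).2 hz⟩,
      fun _ => sInter_subset_of_mem⟩)
    univ ⟨isClosed_univ, by rwa [image_univ]⟩
  exact ⟨m, hm⟩

theorem isScatteredSet_range [CompactSpace X] [T2Space Z] (hX : IsScatteredSet (univ : Set X))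
    {g : X → Z} (hg : Continuous g) : IsScatteredSet (range g) := by
  intro T hT hTne
  obtain ⟨m, hmin⟩ := exists_minimal_isClosed_subset_image hg hT
  obtain ⟨hmc, hTm⟩ := hmin.prop
  obtain ⟨x, hxm, U, hU, hUm⟩ := hX m (subset_univ m) ((hTne.mono hTm).of_image)
  have hmU : IsClosed (m \ U) := hmc.sdiff hU
  obtain ⟨t, htT, htU⟩ : ∃ t ∈ T, t ∉ g '' (m \ U) := by
    by_contra! h
    have hxU : x ∈ U := (hUm.symm.subset rfl).1
    exact (hmin.eq_of_subset ⟨hmU, h⟩ sdiff_subset ▸ hxm).2 hxU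
  have hfiber : ∀ s ∈ T, s ∉ g '' (m \ U) → s = g x := by
    rintro s hs hsU
    obtain ⟨a, ham, rfl⟩ := hTm hs
    have ha : a ∈ U ∩ m := ⟨by_contra fun h => hsU ⟨a, ⟨ham, h⟩, rfl⟩, ham⟩
    rw [hUm, mem_singleton_iff] at ha
    rw [ha]
  refine ⟨t, htT, (g '' (m \ U))ᶜ, (hmU.isCompact.image hg).isClosed.isOpen_compl, ?_⟩
  ext s
  constructor
  · rintro ⟨hsU, hsT⟩
    exact (hfiber s hsT hsU).trans (hfiber t htT htU).symm
  · rintro rfl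
    exact ⟨htU, htT⟩

theorem IsScatteredSet.countable [SecondCountableTopology Z] {S : Set Z} (hS : IsScatteredSet S)
    (hSc : IsClosed S) : S.Countable := by
  by_contra hunc
  obtain ⟨D, hD, hDne, hDS⟩ := exists_perfect_nonempty_of_isClosed_of_not_countable hSc hunc
  obtain ⟨x, hxD, U, hU, hUD⟩ := hS D hDS hDne
  have hxU : x ∈ U := (hUD.symm.subset rfl).1
  obtain ⟨y, hy, hyx⟩ := preperfect_iff_nhds.1 hD.acc x hxD U (hU.mem_nhds hxU)
  exact hyx (hUD.subset hy)

end

theorem stmt18_general {X Y : Type u} [TopologicalSpace X] [CompactSpace X]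
    [TopologicalSpace Y] [TopologicalSpace.MetrizableSpace Y]
    (hscat : IsScatteredSet (Set.univ : Set X))
    (f : X → Y) (hf : Continuous f) :
    (Set.range f).Countable := by
  have : CompactSpace (range f) := isCompact_iff_compactSpace.mp (isCompact_range hf)
  have hrange : IsScatteredSet (univ : Set (range f)) := by
    simpa only [rangeFactorization_surjective.range_eq] using
      isScatteredSet_range (g := rangeFactorization f) hscat (hf.subtype_mk _)
  rw [← countable_coe_iff, ← countable_univ_iff]
  exact hrange.countable isClosed_univ

theorem stmt18 {X Y : Type u} [TopologicalSpace X] [CompactSpace X] [T2Space X]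
    [TopologicalSpace Y] [TopologicalSpace.MetrizableSpace Y]
    (hscat : IsScatteredSet (Set.univ : Set X))
    (f : X → Y) (hf : Continuous f) :
    (Set.range f).Countable :=
  stmt18_general hscat f hf
end
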